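/- arXiv:1309.4183 — 6 statements merged into one kernel-verified Lean document; each statement's English description precedes it below -/
import Mathlib

section
/- Let X_n ~ F^{n,l}_{b,w} be the number of white balls after n draws in the time-inhomogeneous Pólya urn started with b black and w white balls (each draw: replace the drawn ball together with one more of the same color; after every l-th draw add an extra black ball). Let N_i = w + b + i + ⌊i/l⌋ be the total number of balls after i draws. Then for every integer m ≥ 1, E[∏_{i=0}^{m-1}(X_n + i)] = (∏_{j=0}^{m-1}(w+j)) · ∏_{i=1}^{n}(1 + m/N_{i-1}). -/
/-!
The rising factorial `f_m(x) = x (x+1) ⋯ (x+m-1)` is an eigenfunction of one step of the urn: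
from `N` balls, `x` of them white, the next draw is white with probability `x / N`, and
`x f_m(x+1) = (x+m) f_m(x)` turns the expected value of `f_m` after the draw into
`(1 + m/N) f_m(x)`. Iterating over the `n` draws gives the product formula.
-/

open Finset

/-- Total number of balls after `i` draws in the `F^{n,l}_{b,w}` urn. -/
def urnTotal (b w l i : ℕ) : ℕ := w + b + i + i / l

/-- Probability mass function of the number of white balls after `n` draws in the
time-inhomogeneous Pólya urn started with `b` black and `w` white balls: each drawn
ball is replaced together with an additional ball of the same color, and after every
`l`-th draw an extra black ball is added. -/
noncomputable def urnPMF (b w l : ℕ) : ℕ → ℕ → ℝ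
  | 0 => fun k => if k = w then 1 else 0
  | n + 1 => fun k =>
      urnPMF b w l n k * (1 - (k : ℝ) / (urnTotal b w l n : ℝ)) +
      urnPMF b w l n (k - 1) * (((k : ℝ) - 1) / (urnTotal b w l n : ℝ))

theorem ascPochhammer_eval_eq_prod_range {R : Type*} [CommSemiring R] (m : ℕ) (x : R) :
    (ascPochhammer R m).eval x = ∏ i ∈ range m, (x + i) := by
  induction m with
  | zero => simp
  | succ m ih => rw [ascPochhammer_succ_eval, ih, prod_range_succ]

section Urn

variable {b w l : ℕ}

theorem urnPMF_eq_zero_of_lt {n k : ℕ} (h : w + n < k) : urnPMF b w l n k = 0 := by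
  induction n generalizing k with
  | zero => simp only [urnPMF]; rw [if_neg (by omega)]
  | succ n ih => simp only [urnPMF]; rw [ih (by omega), ih (by omega)]; ring

theorem summable_mul_urnPMF (f : ℕ → ℝ) (n : ℕ) :
    Summable fun k => f k * urnPMF b w l n k :=
  summable_of_ne_finset_zero (s := range (w + n + 1)) fun k hk => by
    rw [urnPMF_eq_zero_of_lt (by simpa using hk), mul_zero]

/-- The hypothesis `f 0 = 0` kills the junk term at `k = 0`, where the truncated `k - 1` in
`urnPMF` contributes `urnPMF b w l n 0 * (-1 / N)`. -/
theorem tsum_mul_urnPMF_succ (f : ℕ → ℝ) (hf : f 0 = 0) (n : ℕ) :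
    ∑' k, f k * urnPMF b w l (n + 1) k =
      ∑' k, (f k * (1 - k / (urnTotal b w l n : ℝ)) +
        f (k + 1) * (k / (urnTotal b w l n : ℝ))) * urnPMF b w l n k := by
  set N : ℝ := (urnTotal b w l n : ℝ)
  set p := urnPMF b w l n
  have hstay : Summable fun k => f k * (1 - k / N) * p k := summable_mul_urnPMF _ n
  have hmove : Summable fun k => f (k + 1) * (k / N) * p k := summable_mul_urnPMF _ n
  have hshift : Summable fun k => f k * (p (k - 1) * ((k - 1 : ℝ) / N)) := by
    refine (summable_nat_add_iff 1).mp (hmove.congr fun k => ?_)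
    simp only [Nat.add_sub_cancel, Nat.cast_add, Nat.cast_one, add_sub_cancel_right]
    ring
  calc ∑' k, f k * urnPMF b w l (n + 1) k
      = ∑' k, (f k * (1 - k / N) * p k + f k * (p (k - 1) * ((k - 1 : ℝ) / N))) := by
        refine tsum_congr fun k => ?_
        simp only [urnPMF, p, N]
        ring
    _ = ∑' k, f k * (1 - k / N) * p k + ∑' k, f (k + 1) * (k / N) * p k := by
        rw [hstay.tsum_add hshift, hshift.tsum_eq_zero_add, hf, zero_mul, zero_add]
        congr 1
        refine tsum_congr fun k => ?_
        simp only [Nat.add_sub_cancel, Nat.cast_add, Nat.cast_one, add_sub_cancel_right]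
        ring
    _ = _ := by
        rw [← hstay.tsum_add hmove]
        exact tsum_congr fun k => by ring

end Urn

theorem urn_rising_factorial_moments_general (b w l n m : ℕ) (hm : 1 ≤ m) :
    (∑' k : ℕ, (∏ i ∈ range m, ((k : ℝ) + i)) * urnPMF b w l n k)
      = (∏ j ∈ range m, ((w : ℝ) + j)) *
        ∏ i ∈ range n, (1 + (m : ℝ) / (urnTotal b w l i : ℝ)) := by
  set f : ℕ → ℝ := fun k => ∏ i ∈ range m, ((k : ℝ) + i)
  have hf0 : f 0 = 0 := prod_eq_zero (mem_range.mpr hm) (by simp)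
  have eigen (N : ℝ) (k : ℕ) : f k * (1 - k / N) + f (k + 1) * (k / N) = (1 + m / N) * f k := by
    have := ascPochhammer_eval_succ (S := ℝ) m k
    simp only [f, ← ascPochhammer_eval_eq_prod_range, Nat.cast_add, Nat.cast_one]
    linear_combination this / N
  induction n with
  | zero => rw [tsum_eq_single w fun k hk => by simp [urnPMF, hk]]; simp [urnPMF]
  | succ n ih =>
    calc ∑' k, f k * urnPMF b w l (n + 1) k
        = ∑' k, (1 + m / (urnTotal b w l n : ℝ)) * (f k * urnPMF b w l n k) := by
          simp only [tsum_mul_urnPMF_succ f hf0, eigen, mul_assoc]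
      _ = _ := by rw [tsum_mul_left, ih, prod_range_succ]; ring

/-- Rising factorial moments of the urn:
`E[∏_{i=0}^{m-1}(X_n + i)] = ∏_{j<m}(w+j) · ∏_{i=1}^{n}(1 + m/N_{i-1})`. -/
theorem urn_rising_factorial_moments (b w l n m : ℕ) (hl : 1 ≤ l) (hm : 1 ≤ m) :
    (∑' k : ℕ, (∏ i ∈ range m, ((k : ℝ) + i)) * urnPMF b w l n k)
      = (∏ j ∈ range m, ((w : ℝ) + j)) *
        ∏ i ∈ range n, (1 + (m : ℝ) / (urnTotal b w l i : ℝ)) :=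
  urn_rising_factorial_moments_general b w l n m hm
end

section
/- Let W be a positive random variable with E[W^r] = k/r, let W^(r) have the r-power bias distribution of W (E[W^r f(W)] = E[W^r]·E[f(W^(r))] for all suitable f), and let V_k ~ Beta(k,1) be independent of W^(r); set W* = V_k · W^(r). Then for every bounded function f with bounded derivative and f(0)=0, defining g(x) = f'(x) + (k−1)x^{−1} f(x), we have E[g(W*)] = r · E[W^{r−1} f(W)]. -/
/-! Write `g = equilibriumOperator k f`. For fixed `w > 0` the derivative of
`v ↦ v ^ (k - 1) * f (v * w)` is `w * v ^ (k - 1) * g (v * w)`, so integrating against the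
`Beta(k, 1)` density `k v ^ (k - 1)` on `(0, 1)` gives `E[g (V * w)] = k * f w / w`, with
`f 0 = 0` killing the boundary term at `v = 0`. Since `W > 0`, the biased variable `W'` is almost
surely positive, and independence gives `E[g (V * W')] = k * E[f W' / W']`. Finally
`|f x| ≤ sup |f'| * |x|`, so `x ↦ f x / x` is bounded and the bias identity applied to it turns
`k * E[f W' / W']` into `r * E[W ^ (r - 1) * f W]`. -/

open MeasureTheory Set ProbabilityTheory

noncomputable def equilibriumOperator (k : ℝ) (f : ℝ → ℝ) (x : ℝ) : ℝ :=
  deriv f x + (k - 1) * x⁻¹ * f x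

section DerivBound

variable {f : ℝ → ℝ} {C : ℝ}

lemma abs_le_mul_abs_of_abs_deriv_le (hf : Differentiable ℝ f) (hf0 : f 0 = 0)
    (hC : ∀ x, |deriv f x| ≤ C) (x : ℝ) : |f x| ≤ C * |x| := by
  simpa [hf0] using convex_univ.norm_image_sub_le_of_norm_deriv_le (fun y _ => hf y)
    (fun y _ => hC y) (mem_univ 0) (mem_univ x)

lemma abs_inv_mul_le_of_abs_deriv_le (hf : Differentiable ℝ f) (hf0 : f 0 = 0)
    (hC : ∀ x, |deriv f x| ≤ C) (x : ℝ) : |x⁻¹ * f x| ≤ C := by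
  rcases eq_or_ne x 0 with rfl | hx
  · simpa using (abs_nonneg _).trans (hC 0)
  · rw [abs_mul, abs_inv, inv_mul_le_iff₀ (abs_pos.2 hx), mul_comm]
    exact abs_le_mul_abs_of_abs_deriv_le hf hf0 hC x

lemma abs_equilibriumOperator_le (k : ℝ) (hf : Differentiable ℝ f) (hf0 : f 0 = 0)
    (hC : ∀ x, |deriv f x| ≤ C) (x : ℝ) :
    |equilibriumOperator k f x| ≤ C + |k - 1| * C :=
  calc |equilibriumOperator k f x| ≤ |deriv f x| + |k - 1| * |x⁻¹ * f x| := by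
        rw [equilibriumOperator, mul_assoc, ← abs_mul]; exact abs_add_le _ _
    _ ≤ C + |k - 1| * C := by
        gcongr
        exacts [hC x, abs_inv_mul_le_of_abs_deriv_le hf hf0 hC x]

end DerivBound

lemma measurable_equilibriumOperator (k : ℝ) {f : ℝ → ℝ} (hf : Measurable f) :
    Measurable (equilibriumOperator k f) :=
  (measurable_deriv f).add ((measurable_const.mul measurable_inv).mul hf)

lemma hasDerivAt_rpow_mul_comp_mul (k : ℝ) {f : ℝ → ℝ} {v w : ℝ} (hv : 0 < v) (hw : w ≠ 0)
    (hf : DifferentiableAt ℝ f (v * w)) :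
    HasDerivAt (fun v => v ^ (k - 1) * f (v * w))
      (w * (v ^ (k - 1) * equilibriumOperator k f (v * w))) v := by
  have hpow : HasDerivAt (fun v : ℝ => v ^ (k - 1)) ((k - 1) * v ^ (k - 1 - 1)) v :=
    Real.hasDerivAt_rpow_const (Or.inl hv.ne')
  have hcomp : HasDerivAt (fun v => f (v * w)) (deriv f (v * w) * w) v :=
    hf.hasDerivAt.comp v (hasDerivAt_mul_const w)
  refine (hpow.mul hcomp).congr_deriv ?_
  rw [equilibriumOperator, Real.rpow_sub_one hv.ne']
  field_simp
  ring

lemma integral_rpow_mul_equilibriumOperator {k C : ℝ} (hk : 1 ≤ k) {f : ℝ → ℝ}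
    (hf : Differentiable ℝ f) (hf0 : f 0 = 0) (hC : ∀ x, |deriv f x| ≤ C) {w : ℝ} (hw : w ≠ 0) :
    ∫ v in (0 : ℝ)..1, v ^ (k - 1) * equilibriumOperator k f (v * w) = f w / w := by
  have hpow : Continuous fun v : ℝ => v ^ (k - 1) := Real.continuous_rpow_const (by linarith)
  have hg : IntegrableOn (fun v => equilibriumOperator k f (v * w)) (Icc 0 1) :=
    Measure.integrableOn_of_bounded measure_Icc_lt_top.ne
      ((measurable_equilibriumOperator k hf.continuous.measurable).comp
        (measurable_mul_const w)).aestronglyMeasurable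
      (ae_of_all _ fun v => abs_equilibriumOperator_le k hf hf0 hC (v * w))
  have hint : IntervalIntegrable (fun v => v ^ (k - 1) * equilibriumOperator k f (v * w))
      volume 0 1 :=
    (intervalIntegrable_iff_integrableOn_Icc_of_le zero_le_one).2
      (hg.continuousOn_mul hpow.continuousOn isCompact_Icc)
  have hFTC := intervalIntegral.integral_eq_sub_of_hasDerivAt_of_le zero_le_one
    ((hpow.mul (hf.continuous.comp (continuous_mul_const w))).continuousOn)
    (fun v hv => hasDerivAt_rpow_mul_comp_mul k hv.1 hw (hf _)) (hint.const_mul w)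
  rw [intervalIntegral.integral_const_mul] at hFTC
  rw [eq_div_iff hw, mul_comm, hFTC]
  simp [hf0]

lemma MeasureTheory.Measure.ext_of_Iic_of_mem_Icc {μ ν : Measure ℝ} [IsProbabilityMeasure μ]
    [IsProbabilityMeasure ν] (h : ∀ a ∈ Icc (0 : ℝ) 1, μ (Iic a) = ν (Iic a))
    (h0 : ν (Iic 0) = 0) (h1 : ν (Iic 1) = 1) : μ = ν := by
  have hμ0 : μ (Iic 0) = 0 := (h 0 (by simp)).trans h0
  have hμ1 : μ (Iic 1) = 1 := (h 1 (by simp)).trans h1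
  refine Measure.ext_of_Iic μ ν fun a => ?_
  rcases le_or_gt a 0 with ha0 | ha0
  · rw [measure_mono_null (Iic_subset_Iic.2 ha0) hμ0, measure_mono_null (Iic_subset_Iic.2 ha0) h0]
  rcases le_or_gt a 1 with ha1 | ha1
  · exact h a ⟨ha0.le, ha1⟩
  have hle : Iic 1 ⊆ Iic a := Iic_subset_Iic.2 ha1.le
  rw [le_antisymm prob_le_one (hμ1 ▸ measure_mono hle),
    le_antisymm prob_le_one (h1 ▸ measure_mono hle)]

namespace ProbabilityTheory

section BetaOne

variable {k : ℝ}

lemma beta_one_right (hk : 0 < k) : beta k 1 = k⁻¹ := by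
  rw [beta, Real.Gamma_one, Real.Gamma_add_one hk.ne', mul_one,
    div_mul_cancel_right₀ (Real.Gamma_pos_of_pos hk).ne']

lemma betaPDF_one_right (hk : 0 < k) :
    betaPDF k 1 = (Ioo 0 1).indicator fun v => ENNReal.ofReal (k * v ^ (k - 1)) := by
  ext v
  by_cases hv : v ∈ Ioo 0 1
  · rw [indicator_of_mem hv, betaPDF_of_pos_lt_one hv.1 hv.2, beta_one_right hk]
    simp
  · rw [indicator_of_notMem hv, betaPDF, betaPDFReal, if_neg (show ¬(0 < v ∧ v < 1) from hv),
      ENNReal.ofReal_zero]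

lemma betaMeasure_one_right (hk : 0 < k) :
    betaMeasure k 1 =
      (volume.restrict (Ioc 0 1)).withDensity fun v => ENNReal.ofReal (k * v ^ (k - 1)) := by
  rw [betaMeasure, withDensity_congr_ae (betaPDF_one_right hk ▸
      indicator_ae_eq_of_ae_eq_set Ioo_ae_eq_Ioc), withDensity_indicator measurableSet_Ioc]

lemma integral_betaMeasure_one_right (hk : 0 < k) (h : ℝ → ℝ) :
    ∫ v, h v ∂betaMeasure k 1 = ∫ v in (0 : ℝ)..1, k * v ^ (k - 1) * h v := by
  rw [betaMeasure_one_right hk, integral_withDensity_eq_integral_toReal_smul (by fun_prop)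
      (ae_of_all _ fun _ => ENNReal.ofReal_lt_top), intervalIntegral.integral_of_le zero_le_one]
  refine setIntegral_congr_fun measurableSet_Ioc fun v hv => ?_
  rw [ENNReal.toReal_ofReal (by have := hv.1; positivity), smul_eq_mul]

lemma betaMeasure_one_right_Iic (hk : 0 < k) {a : ℝ} (ha : a ∈ Icc 0 1) :
    betaMeasure k 1 (Iic a) = ENNReal.ofReal (a ^ k) := by
  have hint : IntegrableOn (fun v : ℝ => k * v ^ (k - 1)) (Ioc 0 a) :=
    (intervalIntegrable_iff_integrableOn_Ioc_of_le ha.1).1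
      ((intervalIntegral.intervalIntegrable_rpow' (by linarith)).const_mul k)
  have hset : Iic a ∩ Ioc 0 1 = Ioc 0 a := by
    rw [inter_comm, Ioc_inter_Iic, min_eq_right ha.2]
  rw [betaMeasure_one_right hk, withDensity_apply _ measurableSet_Iic,
    Measure.restrict_restrict measurableSet_Iic, hset,
    ← ofReal_integral_eq_lintegral_ofReal hint
      (ae_restrict_of_forall_mem measurableSet_Ioc fun v hv => by have := hv.1; positivity),
    ← intervalIntegral.integral_of_le ha.1, intervalIntegral.integral_const_mul,
    integral_rpow (Or.inl (by linarith)), sub_add_cancel, Real.zero_rpow hk.ne', sub_zero,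
    mul_div_cancel₀ _ hk.ne']

end BetaOne

lemma integral_equilibriumOperator_comp_mul_right_betaMeasure {k C : ℝ} (hk : 1 ≤ k) {f : ℝ → ℝ}
    (hf : Differentiable ℝ f) (hf0 : f 0 = 0) (hC : ∀ x, |deriv f x| ≤ C) {w : ℝ} (hw : w ≠ 0) :
    ∫ v, equilibriumOperator k f (v * w) ∂betaMeasure k 1 = k * (f w / w) := by
  rw [integral_betaMeasure_one_right (by linarith),
    ← integral_rpow_mul_equilibriumOperator hk hf hf0 hC hw, ← intervalIntegral.integral_const_mul]
  simp_rw [mul_assoc]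

lemma integrable_equilibriumOperator_comp_mul (k : ℝ) {f : ℝ → ℝ} {C : ℝ}
    (hf : Differentiable ℝ f) (hf0 : f 0 = 0) (hC : ∀ x, |deriv f x| ≤ C)
    (ν : Measure (ℝ × ℝ)) [IsFiniteMeasure ν] :
    Integrable (fun p => equilibriumOperator k f (p.1 * p.2)) ν :=
  .of_bound ((measurable_equilibriumOperator k hf.continuous.measurable).comp
    measurable_mul).aestronglyMeasurable _
    (ae_of_all _ fun _ => abs_equilibriumOperator_le k hf hf0 hC _)

section

variable {Ω : Type*} [MeasurableSpace Ω] {μ : Measure Ω}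

lemma map_eq_betaMeasure_one_right [IsProbabilityMeasure μ] {V : Ω → ℝ} (hV : Measurable V)
    {k : ℝ} (hk : 0 < k)
    (hcdf : ∀ x ∈ Icc (0 : ℝ) 1, (μ {ω | V ω ≤ x}).toReal = x ^ k) :
    μ.map V = betaMeasure k 1 := by
  have := isProbabilityMeasureBeta hk one_pos
  have := Measure.isProbabilityMeasure_map (μ := μ) hV.aemeasurable
  refine Measure.ext_of_Iic_of_mem_Icc (fun a ha => ?_) ?_ ?_
  · rw [betaMeasure_one_right_Iic hk ha, ← hcdf a ha, Measure.map_apply hV measurableSet_Iic,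
      ENNReal.ofReal_toReal (measure_ne_top _ _)]
    rfl
  · simp [betaMeasure_one_right_Iic hk, Real.zero_rpow hk.ne']
  · simp [betaMeasure_one_right_Iic hk]

lemma IndepFun.integral_comp_eq_integral_integral_map [IsFiniteMeasure μ] {α β E : Type*}
    [MeasurableSpace α] [MeasurableSpace β] [NormedAddCommGroup E] [NormedSpace ℝ E]
    {X : Ω → α} {Y : Ω → β}
    (hXY : IndepFun X Y μ) (hX : Measurable X) (hY : Measurable Y) {h : α → β → E}
    (hh : Integrable (Function.uncurry h) ((μ.map X).prod (μ.map Y))) :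
    ∫ ω, h (X ω) (Y ω) ∂μ = ∫ y, ∫ x, h x y ∂μ.map X ∂μ.map Y := by
  have hjoint := hXY.map_prod_eq_prod_map_map hX.aemeasurable hY.aemeasurable
  calc ∫ ω, h (X ω) (Y ω) ∂μ
      = ∫ p, Function.uncurry h p ∂μ.map fun ω => (X ω, Y ω) :=
        (integral_map (hX.prodMk hY).aemeasurable (hjoint ▸ hh.aestronglyMeasurable)).symm
    _ = ∫ y, ∫ x, h x y ∂μ.map X ∂μ.map Y := by rw [hjoint, integral_prod_symm _ hh]; rfl

lemma ae_pos_of_integral_pow_mul_eq_mul_integral [IsFiniteMeasure μ] {W W' : Ω → ℝ}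
    (hW' : Measurable W')
    (hWpos : ∀ ω, 0 < W ω) (r : ℕ) {c : ℝ} (hc : c ≠ 0)
    (hbias : ∀ f : ℝ → ℝ, Measurable f → (∃ C, ∀ x, |f x| ≤ C) →
      ∫ ω, W ω ^ r * f (W ω) ∂μ = c * ∫ ω, f (W' ω) ∂μ) :
    ∀ᵐ ω ∂μ, 0 < W' ω := by
  have hnonpos := hbias ((Iic 0).indicator 1) (measurable_one.indicator measurableSet_Iic)
    ⟨1, fun x => by by_cases hx : x ∈ Iic (0 : ℝ) <;> simp [hx]⟩
  have hzero : ∀ ω, (Iic 0).indicator (1 : ℝ → ℝ) (W ω) = 0 := fun ω =>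
    indicator_of_notMem (s := Iic 0) (not_le.2 (hWpos ω)) _
  simp only [hzero, mul_zero, integral_zero, ← indicator_comp_right, Pi.one_comp] at hnonpos
  rw [integral_indicator_one (hW' measurableSet_Iic), zero_eq_mul,
    measureReal_eq_zero_iff] at hnonpos
  simp only [ae_iff, not_lt]
  exact hnonpos.resolve_left hc

end

end ProbabilityTheory

theorem equilibrium_transform_identity_general
    {Ω : Type*} [MeasurableSpace Ω] (μ : Measure Ω) [IsProbabilityMeasure μ]
    (k r : ℕ) (hk : 1 ≤ k) (hr : 1 ≤ r)
    (W W' V : Ω → ℝ) (hW' : Measurable W') (hV : Measurable V)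
    (hWpos : ∀ ω, 0 < W ω)
    (hbias : ∀ f : ℝ → ℝ, Measurable f → (∃ C, ∀ x, |f x| ≤ C) →
      (∫ ω, W ω ^ r * f (W ω) ∂μ) = ((k : ℝ) / r) * ∫ ω, f (W' ω) ∂μ)
    (hbeta : ∀ x ∈ Icc (0:ℝ) 1, (μ {ω | V ω ≤ x}).toReal = x ^ k)
    (hindep : IndepFun V W' μ)
    (f : ℝ → ℝ) (hf : Differentiable ℝ f) (hf0 : f 0 = 0)
    (hfb' : ∃ C, ∀ x, |deriv f x| ≤ C) :
    (∫ ω, (deriv f (V ω * W' ω) + ((k : ℝ) - 1) * (V ω * W' ω)⁻¹ * f (V ω * W' ω)) ∂μ)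
      = (r : ℝ) * ∫ ω, W ω ^ (r - 1) * f (W ω) ∂μ := by
  obtain ⟨C, hC⟩ := hfb'
  have hk0 : (0 : ℝ) < k := by exact_mod_cast hk
  have hr0 : (0 : ℝ) < r := by exact_mod_cast hr
  have hVlaw : μ.map V = betaMeasure k 1 :=
    map_eq_betaMeasure_one_right hV hk0 fun x hx => by rw [Real.rpow_natCast]; exact hbeta x hx
  have hW'pos : ∀ᵐ w ∂μ.map W', 0 < w :=
    (ae_map_iff hW'.aemeasurable measurableSet_Ioi).2
      (ae_pos_of_integral_pow_mul_eq_mul_integral hW' hWpos r (by positivity) hbias)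
  have hquot : Measurable fun x => f x / x := hf.continuous.measurable.div measurable_id
  have hsize := hbias _ hquot
    ⟨C, fun x => by rw [div_eq_inv_mul]; exact abs_inv_mul_le_of_abs_deriv_le hf hf0 hC x⟩
  calc _ = ∫ w, ∫ v, equilibriumOperator k f (v * w) ∂betaMeasure k 1 ∂μ.map W' := by
        rw [← hVlaw]
        exact hindep.integral_comp_eq_integral_integral_map hV hW'
          (h := fun v w => equilibriumOperator k f (v * w))
          (integrable_equilibriumOperator_comp_mul k hf hf0 hC _)
    _ = ∫ w, k * (f w / w) ∂μ.map W' := integral_congr_ae <| hW'pos.mono fun w hw =>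
        integral_equilibriumOperator_comp_mul_right_betaMeasure (Nat.one_le_cast.2 hk) hf hf0 hC
          hw.ne'
    _ = k * ∫ ω, f (W' ω) / W' ω ∂μ := by
        rw [integral_const_mul, integral_map hW'.aemeasurable hquot.aestronglyMeasurable]
    _ = r * ∫ ω, W ω ^ r * (f (W ω) / W ω) ∂μ := by rw [hsize]; field_simp
    _ = r * ∫ ω, W ω ^ (r - 1) * f (W ω) ∂μ := by
        congr 2 with ω
        rw [← pow_sub_one_mul (by omega) (W ω), mul_assoc, mul_div_cancel₀ _ (hWpos ω).ne']

/-- Key identity for the `(k,r)`-generalized equilibrium transform: if `W > 0` with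
`E[W^r] = k/r`, `W'` has the `r`-power bias distribution of `W`, `V ~ Beta(k,1)` is
independent of `W'`, and `W* = V·W'`, then for every bounded differentiable `f`
with bounded derivative and `f(0)=0`, with `g(x) = f'(x) + (k−1)x⁻¹ f(x)`,
`E[g(W*)] = r·E[W^{r−1} f(W)]`. -/
theorem equilibrium_transform_identity
    {Ω : Type*} [MeasurableSpace Ω] (μ : Measure Ω) [IsProbabilityMeasure μ]
    (k r : ℕ) (hk : 1 ≤ k) (hr : 1 ≤ r)
    (W W' V : Ω → ℝ) (hW : Measurable W) (hW' : Measurable W') (hV : Measurable V)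
    (hWpos : ∀ ω, 0 < W ω)
    (hmom : (∫ ω, W ω ^ r ∂μ) = (k : ℝ) / r)
    (hbias : ∀ f : ℝ → ℝ, Measurable f → (∃ C, ∀ x, |f x| ≤ C) →
      (∫ ω, W ω ^ r * f (W ω) ∂μ) = ((k : ℝ) / r) * ∫ ω, f (W' ω) ∂μ)
    (hbeta : ∀ x ∈ Icc (0:ℝ) 1, (μ {ω | V ω ≤ x}).toReal = x ^ k)
    (hindep : IndepFun V W' μ)
    (f : ℝ → ℝ) (hf : Differentiable ℝ f) (hf0 : f 0 = 0)
    (hfb : ∃ C, ∀ x, |f x| ≤ C) (hfb' : ∃ C, ∀ x, |deriv f x| ≤ C) :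
    (∫ ω, (deriv f (V ω * W' ω) + ((k : ℝ) - 1) * (V ω * W' ω)⁻¹ * f (V ω * W' ω)) ∂μ)
      = (r : ℝ) * ∫ ω, W ω ^ (r - 1) * f (W ω) ∂μ :=
  equilibrium_transform_identity_general μ k r hk hr W W' V hW' hV hWpos hbias hbeta hindep f hf hf0
    hfb'
end

section
/- Let B be a convex potential on (a,b) with unique minimum at x_0 and Z ~ P_B with density φ_B(x) = C_B e^{-B(x)}. For bounded h ∈ L_1(B), let f_h(x) = e^{B(x)} ∫_a^x (h(z) − E h(Z)) e^{-B(z)} dz. Then ‖f_h‖_∞ ≤ ‖h − E h(Z)‖_∞ · e^{B(x_0)}/C_B, ‖B' f_h‖_∞ ≤ ‖h − E h(Z)‖_∞, and ‖f_h'‖_∞ ≤ 2‖h − E h(Z)‖_∞. -/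
/-!
Write `ψ = e^{-B}` and `u = h - E h(Z)`. Since `∫_S u ψ = 0`, the solution `f_h(x)` is, up to sign,
`e^{B(x)}` times the integral of `u ψ` over either tail of `S` cut at `x`, so `|f_h(x)|` is at most
`M e^{B(x)}` times the `ψ`-mass of that tail. Convexity puts `B` above its tangent line at `x`, so
`ψ` lies below an exponential whose tail beyond `x` has mass `ψ(x) / B'(x)`; this gives
`B'(x) ∫_{y > x} ψ ≤ ψ(x)` and its mirror image. These yield `|B' f_h| ≤ M`, and they make
`e^{B(x)} ∫_{y > x} ψ` antitone (its derivative is `B' e^B ∫_{y > x} ψ - 1 ≤ 0`), so for `x ≥ x₀`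
the right tail is controlled by its value at `x₀`, and symmetrically on the left. Finally `f_h' - B' f_h = e^B (∫_{y < x} u ψ)'`, whose size is at
most `M` because `u ψ` is dominated by `M ψ`.
-/

open MeasureTheory Set Real
open Filter Topology Pointwise

theorem ConvexOn.add_mul_sub_le_of_hasDerivAt {S : Set ℝ} {f : ℝ → ℝ} {f' x y : ℝ}
    (hf : ConvexOn ℝ S f) (hx : x ∈ S) (hy : y ∈ S) (hfx : HasDerivAt f f' x) :
    f x + f' * (y - x) ≤ f y := by
  rcases lt_trichotomy x y with hxy | rfl | hyx
  · have := hf.le_slope_of_hasDerivAt hx hy hxy hfx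
    rw [slope_def_field, le_div_iff₀ (sub_pos.2 hxy)] at this
    linarith
  · simp
  · have := hf.slope_le_of_hasDerivAt hy hx hyx hfx
    rw [slope_def_field, div_le_iff₀ (sub_pos.2 hyx)] at this
    linarith

theorem ConvexOn.comp_neg {𝕜 E β : Type*} [Ring 𝕜] [PartialOrder 𝕜] [AddCommGroup E]
    [Module 𝕜 E] [AddCommMonoid β] [PartialOrder β] [SMul 𝕜 β] {s : Set E} {f : E → β}
    (hf : ConvexOn 𝕜 s f) : ConvexOn 𝕜 (-s) (fun x => f (-x)) :=
  ⟨hf.1.neg, fun x hx y hy a b ha hb hab => by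
    simpa only [smul_neg, neg_add] using hf.2 hx hy ha hb hab⟩

theorem abs_le_mul_abs_of_hasDerivAt {G Ψ : ℝ → ℝ} {D p M x : ℝ} (hG : HasDerivAt G D x)
    (hΨ : HasDerivAt Ψ p x) (hle : ∀ y, |G y - G x| ≤ M * |Ψ y - Ψ x|) : |D| ≤ M * |p| := by
  refine le_of_tendsto_of_tendsto' (hasDerivAt_iff_tendsto_slope.1 hG).abs
    ((hasDerivAt_iff_tendsto_slope.1 hΨ).abs.const_mul M) fun y => ?_
  simp only [slope_def_field, abs_div, mul_div_assoc']
  exact div_le_div_of_nonneg_right (hle y) (abs_nonneg _)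

section HalfLineIntegrals

variable {S : Set ℝ} {φ : ℝ → ℝ}

theorem setIntegral_inter_Iio_add_inter_Ioi (hS : MeasurableSet S) (hφ : IntegrableOn φ S)
    (x : ℝ) : (∫ z in S ∩ Iio x, φ z) + ∫ z in S ∩ Ioi x, φ z = ∫ z in S, φ z := by
  have := setIntegral_union (s := S ∩ Iio x) (t := S ∩ Ici x) (by grind)
    (hS.inter measurableSet_Ici) (hφ.mono_set inter_subset_left) (hφ.mono_set inter_subset_left)
  rw [← inter_union_distrib_left, Iio_union_Ici, inter_univ] at this
  rw [this, setIntegral_congr_set ((ae_eq_refl S).inter Ioi_ae_eq_Ici)]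

theorem setIntegral_inter_Iio_sub_inter_Iio (hS : MeasurableSet S) (hφ : IntegrableOn φ S)
    (x y : ℝ) :
    (∫ z in S ∩ Iio y, φ z) - ∫ z in S ∩ Iio x, φ z = ∫ z in x..y, S.indicator φ z := by
  have hφ' : Integrable (S.indicator φ) := (integrable_indicator_iff hS).2 hφ
  have hIio (t : ℝ) : ∫ z in S ∩ Iio t, φ z = ∫ z in Iio t, S.indicator φ z := by
    rw [setIntegral_indicator hS, inter_comm]
  rw [hIio, hIio]
  exact intervalIntegral.integral_Iio_sub_Iio' hφ'.integrableOn hφ'.integrableOn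

theorem hasDerivAt_setIntegral_inter_Iio (hS : MeasurableSet S) (hφ : IntegrableOn φ S) {x : ℝ}
    (hSx : S ∈ 𝓝 x) (hφx : ContinuousAt φ x) :
    HasDerivAt (fun y => ∫ z in S ∩ Iio y, φ z) (φ x) x := by
  have hφ' : Integrable (S.indicator φ) := (integrable_indicator_iff hS).2 hφ
  have hcont : ContinuousAt (S.indicator φ) x :=
    hφx.congr (eventually_of_mem hSx fun y hy => (indicator_of_mem hy φ).symm)
  have := (intervalIntegral.integral_hasDerivAt_right IntervalIntegrable.refl
    hφ'.aestronglyMeasurable.stronglyMeasurableAtFilter hcont).const_add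
      (∫ z in S ∩ Iio x, φ z)
  rw [indicator_of_mem (mem_of_mem_nhds hSx)] at this
  refine this.congr_of_eventuallyEq (Eventually.of_forall fun y => ?_)
  dsimp only
  rw [← setIntegral_inter_Iio_sub_inter_Iio hS hφ x y, add_sub_cancel]

theorem hasDerivAt_setIntegral_inter_Ioi (hS : MeasurableSet S) (hφ : IntegrableOn φ S) {x : ℝ}
    (hSx : S ∈ 𝓝 x) (hφx : ContinuousAt φ x) :
    HasDerivAt (fun y => ∫ z in S ∩ Ioi y, φ z) (-φ x) x := by
  refine ((hasDerivAt_setIntegral_inter_Iio hS hφ hSx hφx).const_sub (∫ z in S, φ z))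
    |>.congr_of_eventuallyEq (Eventually.of_forall fun y => ?_)
  dsimp only
  rw [← setIntegral_inter_Iio_add_inter_Ioi hS hφ y, add_sub_cancel_left]

theorem setIntegral_neg_inter_Ioi_neg (S : Set ℝ) (g : ℝ → ℝ) (x : ℝ) :
    ∫ z in -S ∩ Ioi (-x), g (-z) = ∫ z in S ∩ Iio x, g z := by
  rw [← neg_Iio, ← inter_neg]
  exact (Measure.measurePreserving_neg volume).setIntegral_preimage_emb
    (Homeomorph.neg ℝ).measurableEmbedding g _

theorem IntegrableOn.comp_neg {A : Set ℝ} (hφ : IntegrableOn φ A) :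
    IntegrableOn (fun z => φ (-z)) (-A) :=
  ((Measure.measurePreserving_neg volume).integrableOn_comp_preimage
    (Homeomorph.neg ℝ).measurableEmbedding).2 hφ

end HalfLineIntegrals

section Tail

variable {S : Set ℝ} {B B' : ℝ → ℝ}

theorem mul_setIntegral_inter_Ioi_exp_neg_le (hS : MeasurableSet S)
    (hψ : IntegrableOn (fun z => exp (-B z)) S) {x c : ℝ}
    (htan : ∀ y ∈ S, B x + c * (y - x) ≤ B y) :
    c * ∫ z in S ∩ Ioi x, exp (-B z) ≤ exp (-B x) := by
  rcases le_or_gt c 0 with hc | hc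
  · exact (mul_nonpos_of_nonpos_of_nonneg hc (setIntegral_nonneg (hS.inter measurableSet_Ioi)
      fun _ _ => (exp_pos _).le)).trans (exp_pos _).le
  have hE : IntegrableOn (fun z => exp (c * x - B x) * exp (-c * z)) (Ioi x) :=
    (integrableOn_exp_mul_Ioi (neg_neg_of_pos hc) x).const_mul _
  have hle : ∫ z in S ∩ Ioi x, exp (-B z) ≤ ∫ z in Ioi x, exp (c * x - B x) * exp (-c * z) :=
    calc ∫ z in S ∩ Ioi x, exp (-B z)
        ≤ ∫ z in S ∩ Ioi x, exp (c * x - B x) * exp (-c * z) :=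
          setIntegral_mono_on (hψ.mono_set inter_subset_left) (hE.mono_set inter_subset_right)
            (hS.inter measurableSet_Ioi) fun y hy => by
              rw [← exp_add, exp_le_exp]; linarith [htan y hy.1]
      _ ≤ ∫ z in Ioi x, exp (c * x - B x) * exp (-c * z) :=
          setIntegral_mono_set hE (ae_of_all _ fun _ => by positivity)
            inter_subset_right.eventuallyLE
  calc c * ∫ z in S ∩ Ioi x, exp (-B z)
      ≤ c * ∫ z in Ioi x, exp (c * x - B x) * exp (-c * z) := by gcongr
    _ = exp (-B x) := by
      rw [integral_const_mul, integral_exp_mul_Ioi (neg_neg_of_pos hc), neg_div_neg_eq,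
        mul_div_assoc', mul_div_cancel₀ _ hc.ne', ← exp_add]
      congr 1
      ring

theorem mul_setIntegral_inter_Iio_exp_neg_le (hS : MeasurableSet S)
    (hψ : IntegrableOn (fun z => exp (-B z)) S) {x c : ℝ}
    (htan : ∀ y ∈ S, B x + c * (y - x) ≤ B y) :
    -c * ∫ z in S ∩ Iio x, exp (-B z) ≤ exp (-B x) := by
  have := mul_setIntegral_inter_Ioi_exp_neg_le (B := fun z => B (-z)) hS.neg hψ.comp_neg
    (x := -x) (c := -c) fun y hy => by rw [neg_neg]; linarith [htan (-y) hy]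
  simpa only [neg_neg, setIntegral_neg_inter_Ioi_neg S (fun z => exp (-B z))] using this

variable (hS : IsOpen S) (hB : ConvexOn ℝ S B) (hB' : ∀ x ∈ S, HasDerivAt B (B' x) x)
  (hψ : IntegrableOn (fun z => exp (-B z)) S)
include hS hB hB' hψ

theorem antitoneOn_exp_mul_setIntegral_inter_Ioi :
    AntitoneOn (fun x => exp (B x) * ∫ z in S ∩ Ioi x, exp (-B z)) S := by
  have hderiv (x) (hx : x ∈ S) : HasDerivAt (fun x => exp (B x) * ∫ z in S ∩ Ioi x, exp (-B z))
      (B' x * (exp (B x) * ∫ z in S ∩ Ioi x, exp (-B z)) - 1) x := by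
    refine ((hB' x hx).exp.mul (hasDerivAt_setIntegral_inter_Ioi hS.measurableSet hψ
      (hS.mem_nhds hx) (hB' x hx).neg.exp.continuousAt)).congr_deriv ?_
    rw [mul_neg, ← exp_add, add_neg_cancel, exp_zero]
    ring
  refine antitoneOn_of_hasDerivWithinAt_nonpos hB.1
    (fun x hx => (hderiv x hx).continuousAt.continuousWithinAt)
    (fun x hx => (hderiv x (interior_subset hx)).hasDerivWithinAt) fun x hx => ?_
  have hxS := interior_subset hx
  have := mul_setIntegral_inter_Ioi_exp_neg_le hS.measurableSet hψ
    fun y hy => hB.add_mul_sub_le_of_hasDerivAt hxS hy (hB' x hxS)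
  calc B' x * (exp (B x) * ∫ z in S ∩ Ioi x, exp (-B z)) - 1
      = exp (B x) * (B' x * ∫ z in S ∩ Ioi x, exp (-B z)) - exp (B x) * exp (-B x) := by
        rw [← exp_add, add_neg_cancel, exp_zero]; ring
    _ ≤ 0 := by rw [sub_nonpos]; gcongr

theorem monotoneOn_exp_mul_setIntegral_inter_Iio :
    MonotoneOn (fun x => exp (B x) * ∫ z in S ∩ Iio x, exp (-B z)) S := by
  intro x hx y hy hxy
  have := antitoneOn_exp_mul_setIntegral_inter_Ioi (B := fun z => B (-z)) (B' := fun z => -B' (-z))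
    hS.neg hB.comp_neg
    (fun z hz => ((hB' (-z) hz).comp z (hasDerivAt_neg z)).congr_deriv (mul_neg_one _)) hψ.comp_neg
    (neg_mem_neg.2 hy) (neg_mem_neg.2 hx) (neg_le_neg hxy)
  simpa only [neg_neg, setIntegral_neg_inter_Ioi_neg S (fun z => exp (-B z))] using this

theorem exp_mul_setIntegral_inter_Ioi_le {x₀ x : ℝ} (hx₀ : x₀ ∈ S) (hx : x ∈ S) (hx₀x : x₀ ≤ x) :
    exp (B x) * ∫ z in S ∩ Ioi x, exp (-B z) ≤ exp (B x₀) * ∫ z in S, exp (-B z) :=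
  (antitoneOn_exp_mul_setIntegral_inter_Ioi hS hB hB' hψ hx₀ hx hx₀x).trans <| by
    refine mul_le_mul_of_nonneg_left ?_ (exp_pos _).le
    exact setIntegral_mono_set hψ (ae_of_all _ fun _ => (exp_pos _).le)
      inter_subset_left.eventuallyLE

theorem exp_mul_setIntegral_inter_Iio_le {x₀ x : ℝ} (hx₀ : x₀ ∈ S) (hx : x ∈ S) (hxx₀ : x ≤ x₀) :
    exp (B x) * ∫ z in S ∩ Iio x, exp (-B z) ≤ exp (B x₀) * ∫ z in S, exp (-B z) :=
  (monotoneOn_exp_mul_setIntegral_inter_Iio hS hB hB' hψ hx hx₀ hxx₀).trans <| by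
    refine mul_le_mul_of_nonneg_left ?_ (exp_pos _).le
    exact setIntegral_mono_set hψ (ae_of_all _ fun _ => (exp_pos _).le)
      inter_subset_left.eventuallyLE

end Tail

/-- The paper's `f_h`, for `u = h - E h(Z)`. -/
noncomputable def steinSolution (S : Set ℝ) (B u : ℝ → ℝ) (x : ℝ) : ℝ :=
  exp (B x) * ∫ z in S ∩ Iio x, u z * exp (-B z)

section SteinSolution

variable {S : Set ℝ} {B B' u : ℝ → ℝ} {M : ℝ}

theorem abs_exp_mul_setIntegral_le (hψ : IntegrableOn (fun z => exp (-B z)) S)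
    (hu : ∀ z ∈ S, |u z| ≤ M) {A : Set ℝ} (hA : MeasurableSet A) (hAS : A ⊆ S) (t : ℝ) :
    |exp t * ∫ z in A, u z * exp (-B z)| ≤ M * (exp t * ∫ z in A, exp (-B z)) := by
  rw [abs_mul, abs_of_pos (exp_pos t), mul_left_comm, ← integral_const_mul, ← Real.norm_eq_abs]
  refine mul_le_mul_of_nonneg_left (norm_integral_le_of_norm_le ((hψ.mono_set hAS).const_mul M)
    ((ae_restrict_iff' hA).2 (ae_of_all _ fun z hz => ?_))) (exp_pos t).le
  rw [Real.norm_eq_abs, abs_mul, abs_of_pos (exp_pos _)]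
  exact mul_le_mul_of_nonneg_right (hu z (hAS hz)) (exp_pos _).le

theorem abs_setIntegral_inter_Iio_sub_le (hS : MeasurableSet S)
    (hψ : IntegrableOn (fun z => exp (-B z)) S) (hu : ∀ z ∈ S, |u z| ≤ M) (hM : 0 ≤ M)
    (huψ : IntegrableOn (fun z => u z * exp (-B z)) S) (x y : ℝ) :
    |(∫ z in S ∩ Iio y, u z * exp (-B z)) - ∫ z in S ∩ Iio x, u z * exp (-B z)| ≤
      M * |(∫ z in S ∩ Iio y, exp (-B z)) - ∫ z in S ∩ Iio x, exp (-B z)| := by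
  rw [← Real.norm_eq_abs, setIntegral_inter_Iio_sub_inter_Iio hS huψ,
    setIntegral_inter_Iio_sub_inter_Iio hS hψ,
    ← abs_of_nonneg hM, ← abs_mul, ← intervalIntegral.integral_const_mul]
  refine intervalIntegral.norm_integral_le_abs_of_norm_le (ae_of_all _ fun z => ?_)
    (((integrable_indicator_iff hS).2 hψ).const_mul M).intervalIntegrable
  by_cases hz : z ∈ S
  · simp only [indicator_of_mem hz, Real.norm_eq_abs, abs_mul, abs_of_pos (exp_pos _)]
    exact mul_le_mul_of_nonneg_right (hu z hz) (exp_pos _).le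
  · simp [indicator_of_notMem hz]

theorem steinSolution_eq_neg (hS : MeasurableSet S)
    (huψ : IntegrableOn (fun z => u z * exp (-B z)) S)
    (hmean : ∫ z in S, u z * exp (-B z) = 0) (x : ℝ) :
    steinSolution S B u x = -(exp (B x) * ∫ z in S ∩ Ioi x, u z * exp (-B z)) := by
  have := setIntegral_inter_Iio_add_inter_Ioi hS huψ x
  rw [hmean, add_eq_zero_iff_eq_neg] at this
  rw [steinSolution, this, mul_neg]

variable (hS : IsOpen S) (hB : ConvexOn ℝ S B) (hB' : ∀ x ∈ S, HasDerivAt B (B' x) x)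
  (hψ : IntegrableOn (fun z => exp (-B z)) S) (hu : ∀ z ∈ S, |u z| ≤ M)
  (huψ : IntegrableOn (fun z => u z * exp (-B z)) S) (hmean : ∫ z in S, u z * exp (-B z) = 0)
include hS hψ hu

theorem abs_steinSolution_le_Iio (x : ℝ) :
    |steinSolution S B u x| ≤ M * (exp (B x) * ∫ z in S ∩ Iio x, exp (-B z)) :=
  abs_exp_mul_setIntegral_le hψ hu (hS.measurableSet.inter measurableSet_Iio) inter_subset_left _

include huψ hmean in
theorem abs_steinSolution_le_Ioi (x : ℝ) :
    |steinSolution S B u x| ≤ M * (exp (B x) * ∫ z in S ∩ Ioi x, exp (-B z)) := by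
  rw [steinSolution_eq_neg hS.measurableSet huψ hmean, abs_neg]
  exact abs_exp_mul_setIntegral_le hψ hu (hS.measurableSet.inter measurableSet_Ioi)
    inter_subset_left _

include hB hB' huψ hmean

theorem abs_steinSolution_le {x₀ x : ℝ} (hx₀ : x₀ ∈ S) (hx : x ∈ S) :
    |steinSolution S B u x| ≤ M * (exp (B x₀) * ∫ z in S, exp (-B z)) := by
  have hM : 0 ≤ M := (abs_nonneg _).trans (hu x hx)
  rcases le_total x x₀ with hxx₀ | hx₀x
  · exact (abs_steinSolution_le_Iio hS hψ hu x).trans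
      (mul_le_mul_of_nonneg_left (exp_mul_setIntegral_inter_Iio_le hS hB hB' hψ hx₀ hx hxx₀) hM)
  · exact (abs_steinSolution_le_Ioi hS hψ hu huψ hmean x).trans
      (mul_le_mul_of_nonneg_left (exp_mul_setIntegral_inter_Ioi_le hS hB hB' hψ hx₀ hx hx₀x) hM)

theorem abs_mul_steinSolution_le {x : ℝ} (hx : x ∈ S) : |B' x * steinSolution S B u x| ≤ M := by
  have hM : 0 ≤ M := (abs_nonneg _).trans (hu x hx)
  have htan : ∀ y ∈ S, B x + B' x * (y - x) ≤ B y := fun y hy =>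
    hB.add_mul_sub_le_of_hasDerivAt hx hy (hB' x hx)
  have hexp : M * exp (B x) * exp (-B x) = M := by
    rw [mul_assoc, ← exp_add, add_neg_cancel, exp_zero, mul_one]
  rw [abs_mul]
  rcases le_total (B' x) 0 with hneg | hpos
  · calc |B' x| * |steinSolution S B u x|
        ≤ -B' x * (M * (exp (B x) * ∫ z in S ∩ Iio x, exp (-B z))) := by
          rw [abs_of_nonpos hneg]
          exact mul_le_mul_of_nonneg_left (abs_steinSolution_le_Iio hS hψ hu x) (neg_nonneg.2 hneg)
      _ = M * exp (B x) * (-B' x * ∫ z in S ∩ Iio x, exp (-B z)) := by ring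
      _ ≤ M * exp (B x) * exp (-B x) := by
          gcongr; exact mul_setIntegral_inter_Iio_exp_neg_le hS.measurableSet hψ htan
      _ = M := hexp
  · calc |B' x| * |steinSolution S B u x|
        ≤ B' x * (M * (exp (B x) * ∫ z in S ∩ Ioi x, exp (-B z))) := by
          rw [abs_of_nonneg hpos]
          exact mul_le_mul_of_nonneg_left (abs_steinSolution_le_Ioi hS hψ hu huψ hmean x) hpos
      _ = M * exp (B x) * (B' x * ∫ z in S ∩ Ioi x, exp (-B z)) := by ring
      _ ≤ M * exp (B x) * exp (-B x) := by
          gcongr; exact mul_setIntegral_inter_Ioi_exp_neg_le hS.measurableSet hψ htan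
      _ = M := hexp

/-- `u` need not be continuous, so the derivative is controlled through the Lipschitz bound of
`y ↦ ∫_{S ∩ (-∞, y)} u ψ` against `y ↦ ∫_{S ∩ (-∞, y)} ψ`. -/
theorem abs_deriv_steinSolution_sub_le {x : ℝ} (hx : x ∈ S) :
    |deriv (steinSolution S B u) x - B' x * steinSolution S B u x| ≤ M := by
  by_cases hd : DifferentiableAt ℝ (steinSolution S B u) x
  swap
  · rw [deriv_zero_of_not_differentiableAt hd, zero_sub, abs_neg]
    exact abs_mul_steinSolution_le hS hB hB' hψ hu huψ hmean hx
  have hM : 0 ≤ M := (abs_nonneg _).trans (hu x hx)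
  have hG : HasDerivAt (fun y => ∫ z in S ∩ Iio y, u z * exp (-B z))
      (exp (-B x) * (deriv (steinSolution S B u) x - B' x * steinSolution S B u x)) x := by
    have hGF : (fun y => ∫ z in S ∩ Iio y, u z * exp (-B z)) =
        fun y => exp (-B y) * steinSolution S B u y := by
      funext y; rw [steinSolution, ← mul_assoc, ← exp_add, neg_add_cancel, exp_zero, one_mul]
    rw [hGF]
    exact ((hB' x hx).neg.exp.mul hd.hasDerivAt).congr_deriv (by simp only [Pi.neg_apply]; ring)
  have hΨ := hasDerivAt_setIntegral_inter_Iio hS.measurableSet hψ (hS.mem_nhds hx)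
    (hB' x hx).neg.exp.continuousAt
  have := abs_le_mul_abs_of_hasDerivAt hG hΨ
    (abs_setIntegral_inter_Iio_sub_le hS.measurableSet hψ hu hM huψ x)
  rwa [abs_mul, abs_of_pos (exp_pos _), mul_comm M, mul_le_mul_iff_right₀ (exp_pos _)] at this

end SteinSolution

theorem stein_solution_bounds_convex_potential_general
    (a b : EReal)
    (B B' : ℝ → ℝ)
    (S : Set ℝ) (hS : S = {x : ℝ | a < (x : EReal) ∧ (x : EReal) < b})
    (hconv : ConvexOn ℝ S B)
    (hderiv : ∀ x ∈ S, HasDerivAt B (B' x) x)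
    (hint : IntegrableOn (fun z => Real.exp (-(B z))) S)
    (x0 : ℝ) (hx0 : x0 ∈ S)
    (h : ℝ → ℝ) (hmeas : Measurable h)
    (hL1 : IntegrableOn (fun z => |h z| * Real.exp (-(B z))) S)
    (CB : ℝ) (hCB : CB = (∫ z in S, Real.exp (-(B z)))⁻¹)
    (Eh : ℝ) (hEh : Eh = CB * ∫ z in S, h z * Real.exp (-(B z)))
    (f : ℝ → ℝ)
    (hf : ∀ x, f x = Real.exp (B x) * ∫ z in S ∩ Iio x, (h z - Eh) * Real.exp (-(B z)))
    (M : ℝ) (hM : ∀ z ∈ S, |h z - Eh| ≤ M) :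
    ∀ x ∈ S,
      |f x| ≤ M * Real.exp (B x0) / CB ∧
      |B' x * f x| ≤ M ∧
      |deriv f x| ≤ 2 * M := by
  have hSo : IsOpen S := hS ▸ isOpen_Ioo.preimage continuous_coe_real_ereal
  have hI : (∫ z in S, exp (-B z)) ≠ 0 := by
    have : NeZero (volume.restrict S) := ⟨by simpa using (hSo.measure_ne_zero volume ⟨x0, hx0⟩)⟩
    exact (integral_exp_pos hint).ne'
  have hhψ : IntegrableOn (fun z => h z * exp (-B z)) S :=
    hL1.mono' (hmeas.aestronglyMeasurable.mul hint.1) (ae_of_all _ fun z => by simp)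
  have huψ : IntegrableOn (fun z => (h z - Eh) * exp (-B z)) S := by
    simp only [sub_mul]
    exact hhψ.sub (hint.const_mul Eh)
  have hmean : ∫ z in S, (h z - Eh) * exp (-B z) = 0 := by
    simp only [sub_mul]
    rw [integral_sub hhψ (hint.const_mul Eh), integral_const_mul, hEh, hCB]
    field_simp
    ring
  obtain rfl : f = steinSolution S B (fun z => h z - Eh) := funext hf
  intro x hx
  have hBf := abs_mul_steinSolution_le hSo hconv hderiv hint hM huψ hmean hx
  refine ⟨?_, hBf, ?_⟩
  · rw [hCB, div_inv_eq_mul, mul_assoc]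
    exact abs_steinSolution_le hSo hconv hderiv hint hM huψ hmean hx0 hx
  · have := abs_deriv_steinSolution_sub_le hSo hconv hderiv hint hM huψ hmean hx
    linarith [abs_sub_abs_le_abs_sub (deriv (steinSolution S B (fun z => h z - Eh)) x)
      (B' x * steinSolution S B (fun z => h z - Eh) x)]

/-- Uniform bounds on the solution of the Stein equation for a distribution with a
convex potential `B` on `(a,b)` (with possibly infinite endpoints), density
`C_B e^{-B}`, and unique minimum of `B` at `x₀`: with `h` bounded, and
`f_h(x) = e^{B(x)} ∫_a^x (h(z) − E h(Z)) e^{-B(z)} dz`,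
we have `‖f_h‖ ≤ ‖h − Eh‖ e^{B(x₀)}/C_B`, `‖B' f_h‖ ≤ ‖h − Eh‖`, `‖f_h'‖ ≤ 2‖h − Eh‖`. -/
theorem stein_solution_bounds_convex_potential
    (a b : EReal) (hab : a < b)
    (B B' : ℝ → ℝ)
    (S : Set ℝ) (hS : S = {x : ℝ | a < (x : EReal) ∧ (x : EReal) < b})
    (hconv : ConvexOn ℝ S B)
    (hderiv : ∀ x ∈ S, HasDerivAt B (B' x) x)
    (hint : IntegrableOn (fun z => Real.exp (-(B z))) S)
    (x0 : ℝ) (hx0 : x0 ∈ S) (hmin : IsMinOn B S x0)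
    (huniq : ∀ y ∈ S, IsMinOn B S y → y = x0)
    (h : ℝ → ℝ) (hmeas : Measurable h)
    (hL1 : IntegrableOn (fun z => |h z| * Real.exp (-(B z))) S)
    (CB : ℝ) (hCB : CB = (∫ z in S, Real.exp (-(B z)))⁻¹)
    (Eh : ℝ) (hEh : Eh = CB * ∫ z in S, h z * Real.exp (-(B z)))
    (f : ℝ → ℝ)
    (hf : ∀ x, f x = Real.exp (B x) * ∫ z in S ∩ Iio x, (h z - Eh) * Real.exp (-(B z)))
    (M : ℝ) (hM : ∀ z ∈ S, |h z - Eh| ≤ M) :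
    ∀ x ∈ S,
      |f x| ≤ M * Real.exp (B x0) / CB ∧
      |B' x * f x| ≤ M ∧
      |deriv f x| ≤ 2 * M :=
  stein_solution_bounds_convex_potential_general a b B B' S hS hconv hderiv hint x0 hx0 h hmeas hL1
    CB hCB Eh hEh f hf M hM
end

section
/- For all x ≥ 0, √2 · e^{4/9} · exp(−1/(6(x+3/8))) · x^x e^{−x} √(x+1/2) ≤ Γ(x+1) ≤ √(2π) · exp(−1/(6(x+3/8))) · x^x e^{−x} √(x+1/2), with the convention 0^0 = 1. -/
/-!
Let `f x = log Γ(x+1) - (x log x - x + log (x + 1/2) / 2 - 1 / (6 (x + 3/8)))`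
(`batirRemainder`), so that the claim reads `log 2 / 2 + 4/9 = f 0 ≤ f x ≤ log (2π) / 2`.
By Stirling's formula `f n → log (2π) / 2`, so it suffices that `f` is increasing on `[0, ∞)`,
i.e. that `g y = ψ(y+1) - log y - 1/(2y+1) - 1/(6 (y + 3/8)^2)` (`batirRemainderDeriv`, with
`ψ` the digamma function) is nonnegative. Log-convexity of `Γ` gives
`log y ≤ ψ(y+1) ≤ log (y+1)`, hence `g y → 0`. The recurrence `ψ(y+2) = ψ(y+1) + 1/(y+1)`
reduces `g (y+1) ≤ g y` to a rational lower bound for `log (y+1) - log y = 2 artanh (1/(2y+1))`,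
which the first three terms of the artanh series already give. So `g y ≥ lim g (y+n) = 0`.
-/

open Real Filter Topology Set

lemma sum_range_le_log_one_add_sub_log_one_sub {u : ℝ} (h0 : 0 ≤ u) (h1 : u < 1) (n : ℕ) :
    ∑ k ∈ Finset.range n, 2 * (1 / (2 * k + 1)) * u ^ (2 * k + 1) ≤
      log (1 + u) - log (1 - u) :=
  sum_le_hasSum _ (fun k _ => by positivity)
    (hasSum_log_sub_log_of_abs_lt_one (by rwa [abs_of_nonneg h0]))

lemma batir_rational_le_log_add_one_sub_log {y : ℝ} (hy : 0 < y) :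
    1 / (y + 1) + 1 / (2 * y + 1) - 1 / (2 * y + 3) + 1 / (6 * (y + 3 / 8) ^ 2)
      - 1 / (6 * (y + 11 / 8) ^ 2) ≤ log (y + 1) - log y := by
  set u := 1 / (2 * y + 1) with hu
  have hlog : log (y + 1) - log y = log (1 + u) - log (1 - u) := by
    have h1u : 1 - u = 2 * y / (2 * y + 1) := by rw [hu]; field_simp; ring
    rw [← log_div (by positivity) hy.ne', ← log_div (by positivity) (by rw [h1u]; positivity),
      h1u, hu]
    congr 1
    field_simp
    ring
  have hseries := sum_range_le_log_one_add_sub_log_one_sub (u := u) (by positivity)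
    (by rw [hu, div_lt_one (by positivity)]; linarith) 3
  norm_num [Finset.sum_range_succ] at hseries
  rw [hlog]
  refine le_trans ?_ hseries
  rw [← sub_nonneg]
  -- after clearing denominators the numerator has positive coefficients
  have hdiff : 2 * u + 2 / 3 * u ^ 3 + 2 / 5 * u ^ 5 -
      (1 / (y + 1) + 1 / (2 * y + 1) - 1 / (2 * y + 3) + 1 / (6 * (y + 3 / 8) ^ 2)
        - 1 / (6 * (y + 11 / 8) ^ 2))
      = (14847 + 125536 * y + 398152 * y ^ 2 + 593912 * y ^ 3 + 427584 * y ^ 4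
          + 125952 * y ^ 5 + 8192 * y ^ 6)
        / (15 * (y + 1) * (2 * y + 1) ^ 5 * (2 * y + 3) * (8 * y + 3) ^ 2 * (8 * y + 11) ^ 2) := by
    rw [hu]; field_simp; ring
  rw [hdiff]
  positivity

noncomputable def digamma : ℝ → ℝ := deriv (log ∘ Gamma)

lemma differentiableAt_log_comp_Gamma {y : ℝ} (hy : 0 < y) :
    DifferentiableAt ℝ (log ∘ Gamma) y :=
  (differentiableAt_Gamma fun m => ((neg_nonpos.mpr m.cast_nonneg).trans_lt hy).ne').log
    (Gamma_pos_of_pos hy).ne'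

lemma log_Gamma_add_one {y : ℝ} (hy : 0 < y) : log (Gamma (y + 1)) = log y + log (Gamma y) := by
  rw [Gamma_add_one hy.ne', log_mul hy.ne' (Gamma_pos_of_pos hy).ne']

lemma digamma_add_one {y : ℝ} (hy : 0 < y) : digamma (y + 1) = digamma y + y⁻¹ := by
  rw [digamma, ← deriv_comp_add_const, ← deriv_log, add_comm (deriv _ y),
    ← deriv_add (differentiableAt_log hy.ne') (differentiableAt_log_comp_Gamma hy)]
  apply EventuallyEq.deriv_eq
  filter_upwards [eventually_gt_nhds hy] with t ht using log_Gamma_add_one ht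

lemma slope_log_comp_Gamma {y : ℝ} (hy : 0 < y) : slope (log ∘ Gamma) y (y + 1) = log y := by
  simp [slope_def_field, log_Gamma_add_one hy]

lemma log_le_digamma_add_one {y : ℝ} (hy : 0 < y) : log y ≤ digamma (y + 1) :=
  slope_log_comp_Gamma hy ▸ convexOn_log_Gamma.slope_le_deriv hy (by positivity : 0 < y + 1)
    (by linarith) (differentiableAt_log_comp_Gamma (by positivity))

lemma digamma_add_one_le_log_add_one {y : ℝ} (hy : 0 < y) : digamma (y + 1) ≤ log (y + 1) :=
  have hy1 : 0 < y + 1 := by positivity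
  slope_log_comp_Gamma hy1 ▸ convexOn_log_Gamma.deriv_le_slope hy1 (by positivity : 0 < y + 1 + 1)
    (by linarith) (differentiableAt_log_comp_Gamma hy1)

noncomputable def batirRemainder (x : ℝ) : ℝ :=
  log (Gamma (x + 1)) - (x * log x - x + log (x + 1 / 2) / 2 - 1 / (6 * (x + 3 / 8)))

noncomputable def batirRemainderDeriv (y : ℝ) : ℝ :=
  digamma (y + 1) - log y - 1 / (2 * y + 1) - 1 / (6 * (y + 3 / 8) ^ 2)

lemma batirRemainderDeriv_add_one_le {y : ℝ} (hy : 0 < y) :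
    batirRemainderDeriv (y + 1) ≤ batirRemainderDeriv y := by
  have hrat := batir_rational_le_log_add_one_sub_log hy
  simp only [batirRemainderDeriv, digamma_add_one (by positivity : 0 < y + 1)]
  ring_nf at hrat ⊢
  linarith

lemma tendsto_batirRemainderDeriv_atTop : Tendsto batirRemainderDeriv atTop (𝓝 0) := by
  have hlin : Tendsto (fun t : ℝ => 2 * t + 1) atTop atTop :=
    tendsto_atTop_add_const_right _ _ (tendsto_id.const_mul_atTop two_pos)
  have hquad : Tendsto (fun t : ℝ => 6 * (t + 3 / 8) ^ 2) atTop atTop :=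
    ((tendsto_pow_atTop two_ne_zero).comp
      (tendsto_atTop_add_const_right _ _ tendsto_id)).const_mul_atTop (by norm_num)
  have hlower :
      Tendsto (fun t : ℝ => -(1 / (2 * t + 1)) - 1 / (6 * (t + 3 / 8) ^ 2)) atTop (𝓝 0) := by
    simpa [one_div] using hlin.inv_tendsto_atTop.neg.sub hquad.inv_tendsto_atTop
  refine tendsto_of_tendsto_of_tendsto_of_le_of_le' hlower (tendsto_log_comp_add_sub_log 1) ?_ ?_
  · filter_upwards [eventually_gt_atTop 0] with t ht
    have := log_le_digamma_add_one ht
    simp only [batirRemainderDeriv]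
    linarith
  · filter_upwards [eventually_gt_atTop 0] with t ht
    have := digamma_add_one_le_log_add_one ht
    simp only [batirRemainderDeriv]
    have : 0 ≤ 1 / (2 * t + 1) := by positivity
    have : 0 ≤ 1 / (6 * (t + 3 / 8) ^ 2) := by positivity
    linarith

lemma le_of_tendsto_of_le_add_one {g : ℝ → ℝ} {c y : ℝ} (hg : Tendsto g atTop (𝓝 c))
    (hstep : ∀ n : ℕ, g (y + n + 1) ≤ g (y + n)) : c ≤ g y := by
  have hanti : Antitone fun n : ℕ => g (y + n) :=
    antitone_nat_of_succ_le fun n => by simpa [add_assoc] using hstep n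
  refine le_of_tendsto (hg.comp (tendsto_atTop_add_const_left _ y tendsto_natCast_atTop_atTop))
    (Eventually.of_forall fun n => ?_)
  simpa using hanti (Nat.zero_le n)

lemma batirRemainderDeriv_nonneg {y : ℝ} (hy : 0 < y) : 0 ≤ batirRemainderDeriv y :=
  le_of_tendsto_of_le_add_one tendsto_batirRemainderDeriv_atTop
    fun n => batirRemainderDeriv_add_one_le (by positivity)

lemma hasDerivAt_batirRemainder {y : ℝ} (hy : 0 < y) :
    HasDerivAt batirRemainder (batirRemainderDeriv y) y := by
  have hlogGamma : HasDerivAt (fun t => log (Gamma (t + 1))) (digamma (y + 1)) y :=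
    (differentiableAt_log_comp_Gamma (by positivity)).hasDerivAt.comp_add_const
  have hlog : HasDerivAt (fun t => log (t + 1 / 2) / 2) (1 / (y + 1 / 2) / 2) y :=
    (((hasDerivAt_id y).add_const (1 / 2)).log (by positivity)).div_const 2
  have hrat : HasDerivAt (fun t => 1 / (6 * (t + 3 / 8))) (-6 / (6 * (y + 3 / 8)) ^ 2) y := by
    simp only [one_div]
    exact ((((hasDerivAt_id y).add_const (3 / 8)).const_mul 6).inv (by positivity)).congr_deriv
      (by simp)
  refine (hlogGamma.sub ((((hasDerivAt_mul_log hy.ne').sub (hasDerivAt_id y)).add hlog).sub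
    hrat)).congr_deriv ?_
  simp only [batirRemainderDeriv]
  field_simp
  ring

lemma continuousOn_batirRemainder : ContinuousOn batirRemainder (Ici 0) := by
  intro y (hy : 0 ≤ y)
  have hlogGamma : ContinuousAt (fun t => log (Gamma (t + 1))) y :=
    ContinuousAt.comp (g := log ∘ Gamma)
      (differentiableAt_log_comp_Gamma (by linarith)).continuousAt (by fun_prop)
  refine ContinuousAt.continuousWithinAt ?_
  unfold batirRemainder
  fun_prop (disch := positivity)

lemma monotoneOn_batirRemainder : MonotoneOn batirRemainder (Ici 0) := by
  refine monotoneOn_of_deriv_nonneg (convex_Ici 0) continuousOn_batirRemainder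
    (fun y hy => ?_) (fun y hy => ?_) <;> rw [interior_Ici] at hy
  · exact (hasDerivAt_batirRemainder hy).differentiableAt.differentiableWithinAt
  · exact (hasDerivAt_batirRemainder hy).deriv ▸ batirRemainderDeriv_nonneg hy

lemma batirRemainder_natCast {n : ℕ} (hn : n ≠ 0) :
    batirRemainder n = log (Stirling.stirlingSeq n) + log 2 / 2
      - (log (n + 1 / 2) - log n) / 2 + 1 / (6 * (n + 3 / 8)) := by
  have hn0 : (n : ℝ) ≠ 0 := Nat.cast_ne_zero.2 hn
  rw [batirRemainder, Stirling.log_stirlingSeq_formula, Gamma_nat_eq_factorial,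
    log_div hn0 (exp_pos 1).ne', log_exp, log_mul two_ne_zero hn0]
  ring

lemma tendsto_batirRemainder_natCast :
    Tendsto (fun n : ℕ => batirRemainder n) atTop (𝓝 (log (2 * π) / 2)) := by
  have hstirling :
      Tendsto (fun n : ℕ => log (Stirling.stirlingSeq n)) atTop (𝓝 (log π / 2)) := by
    rw [← log_sqrt pi_pos.le]
    exact (continuousAt_log (by positivity)).tendsto.comp Stirling.tendsto_stirlingSeq_sqrt_pi
  have hlogDiff := (tendsto_log_comp_add_sub_log (1 / 2)).comp tendsto_natCast_atTop_atTop
  have hrat : Tendsto (fun n : ℕ => 1 / (6 * ((n : ℝ) + 3 / 8))) atTop (𝓝 0) := by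
    simp only [one_div]
    exact (tendsto_atTop_add_const_right _ _ tendsto_natCast_atTop_atTop).const_mul_atTop
      (by norm_num) |>.inv_tendsto_atTop
  have hlim := ((hstirling.add_const (log 2 / 2)).sub (hlogDiff.div_const 2)).add hrat
  rw [log_mul two_ne_zero pi_ne_zero]
  convert hlim.congr' ?_ using 2
  · ring
  · filter_upwards [eventually_ne_atTop 0] with n hn
    exact (batirRemainder_natCast hn).symm

lemma batirRemainder_le {x : ℝ} (hx : 0 ≤ x) : batirRemainder x ≤ log (2 * π) / 2 := by
  refine ge_of_tendsto tendsto_batirRemainder_natCast ?_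
  filter_upwards [eventually_ge_atTop ⌈x⌉₊] with n hn
  exact monotoneOn_batirRemainder hx (mem_Ici.2 n.cast_nonneg)
    ((Nat.le_ceil x).trans (by exact_mod_cast hn))

lemma batirRemainder_zero : batirRemainder 0 = log 2 / 2 + 4 / 9 := by
  have hlog_half : log (1 / 2 : ℝ) = -log 2 := by rw [one_div, log_inv]
  norm_num [batirRemainder, hlog_half]
  ring

lemma exp_log_div_two {y : ℝ} (hy : 0 < y) : exp (log y / 2) = √y := by
  rw [← log_sqrt hy.le, exp_log (sqrt_pos.2 hy)]

lemma rpow_self_eq_exp_mul_log {x : ℝ} (hx : 0 ≤ x) : x ^ x = exp (x * log x) := by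
  rcases hx.eq_or_lt with rfl | hx
  · simp
  · rw [rpow_def_of_pos hx, mul_comm]

lemma Gamma_add_one_eq_exp_batirRemainder_mul {x : ℝ} (hx : 0 ≤ x) :
    Gamma (x + 1) = exp (batirRemainder x) *
      (exp (-(1 / (6 * (x + 3 / 8)))) * x ^ x * exp (-x) * √(x + 1 / 2)) := by
  rw [rpow_self_eq_exp_mul_log hx, ← exp_log_div_two (by positivity : 0 < x + 1 / 2)]
  conv_lhs => rw [← exp_log (Gamma_pos_of_pos (by positivity : 0 < x + 1))]
  simp only [← exp_add, batirRemainder]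
  ring_nf

/-- Batir's refinement of Stirling's formula: for all `x ≥ 0`,
`√2 e^{4/9} e^{−1/(6(x+3/8))} x^x e^{−x} √(x+1/2) ≤ Γ(x+1)
  ≤ √(2π) e^{−1/(6(x+3/8))} x^x e^{−x} √(x+1/2)`
(with the convention `0^0 = 1`, as for `Real.rpow`). -/
theorem batir_stirling (x : ℝ) (hx : 0 ≤ x) :
    Real.sqrt 2 * Real.exp (4 / 9) * Real.exp (-(1 / (6 * (x + 3 / 8)))) *
        x ^ x * Real.exp (-x) * Real.sqrt (x + 1 / 2) ≤ Real.Gamma (x + 1) ∧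
    Real.Gamma (x + 1) ≤ Real.sqrt (2 * Real.pi) * Real.exp (-(1 / (6 * (x + 3 / 8)))) *
        x ^ x * Real.exp (-x) * Real.sqrt (x + 1 / 2) := by
  have hlower : √2 * exp (4 / 9) ≤ exp (batirRemainder x) := by
    rw [← exp_log_div_two two_pos, ← exp_add, ← batirRemainder_zero]
    exact exp_le_exp.2 (monotoneOn_batirRemainder self_mem_Ici hx hx)
  have hupper : exp (batirRemainder x) ≤ √(2 * π) := by
    rw [← exp_log_div_two (by positivity)]
    exact exp_le_exp.2 (batirRemainder_le hx)
  have hS : 0 ≤ exp (-(1 / (6 * (x + 3 / 8)))) * x ^ x * exp (-x) * √(x + 1 / 2) := by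
    positivity
  rw [Gamma_add_one_eq_exp_batirRemainder_mul hx]
  constructor
  · simpa only [mul_assoc] using mul_le_mul_of_nonneg_right hlower hS
  · simpa only [mul_assoc] using mul_le_mul_of_nonneg_right hupper hS
end

section
/- Let B(x) = x^r − (k−1) ln x with k,r ≥ 1 and x_0 = ((k−1)/r)^{1/r}. Then e^{B(x_0)}·Γ(k/r)/r ≤ M'_{k,r} := √(2π) exp(−1/(6((k−1)/r + 3/8))) · ((k−1)/r + 1/2)^{1/2} · ((k−1)/r + 1)^{1/r} / k. -/
/-! Batir's bound `Γ(t+1) ≤ √(2π) (t/e)^t √(t+1/2) e^{-1/(6(t+3/8))}` holds because the gap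
between the logarithms of the two sides does not increase under `t ↦ t + 1` (an elementary
inequality, obtained by truncating the series of `log (1 + 1/a)` after two terms and bounding the
tail by a geometric series), while along `t + n` it is bounded below, by Wendel's inequality and
Stirling's formula for `n!`, by a sequence tending to `0`.
With `t = (k-1)/r` one has `Γ(k/r)/r = Γ(t+1+1/r)/k ≤ (t+1)^{1/r} Γ(t+1)/k` by Wendel's
inequality, and Batir's bound turns `e^{B(x₀)} Γ(t+1)` into `M'_{k,r}`. -/

open Real Filter Topology Set

namespace Real

theorem Gamma_add_le_rpow_mul_Gamma {x s : ℝ} (hx : 0 < x) (hs₀ : 0 ≤ s) (hs₁ : s ≤ 1) :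
    Gamma (x + s) ≤ x ^ s * Gamma x := by
  have hΓ := Gamma_pos_of_pos hx
  have hconv := convexOn_log_Gamma.2 (mem_Ioi.2 hx) (mem_Ioi.2 (by linarith : 0 < x + 1))
    (sub_nonneg.2 hs₁) hs₀ (by ring)
  simp only [smul_eq_mul, Function.comp_apply, Gamma_add_one hx.ne', log_mul hx.ne' hΓ.ne']
    at hconv
  have hlog : log (Gamma (x + s)) ≤ log (x ^ s * Gamma x) := by
    rw [log_mul (by positivity) hΓ.ne', log_rpow hx,
      show (1 - s) * x + s * (x + 1) = x + s by ring] at *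
    linarith
  exact (log_le_log_iff (Gamma_pos_of_pos (by linarith)) (by positivity)).1 hlog

end Real

theorem log_one_add_inv_le {a : ℝ} (ha : 0 < a) :
    log (1 + a⁻¹) ≤ 2 / (2 * a + 1) + 2 / (3 * (2 * a + 1) ^ 3)
      + 1 / (10 * a * (a + 1) * (2 * a + 1) ^ 3) := by
  have htail := (hasSum_nat_add_iff' 2).2 (hasSum_log_one_add_inv ha)
  set v := 1 / (2 * a + 1) with hv
  have hv₀ : 0 ≤ v := by positivity
  have hv₁ : v < 1 := by rw [hv, div_lt_one (by positivity)]; linarith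
  have hgeom := (hasSum_geometric_of_lt_one (pow_nonneg hv₀ 2) (by nlinarith)).mul_left
    (2 / 5 * v ^ 5)
  have hle := hasSum_le (fun n => ?_) htail hgeom
  · have hsum : 2 / (2 * a + 1) + 2 / (3 * (2 * a + 1) ^ 3)
          + 1 / (10 * a * (a + 1) * (2 * a + 1) ^ 3)
        = ∑ i ∈ Finset.range 2, 2 * (1 / (2 * (i : ℝ) + 1)) * v ^ (2 * i + 1)
          + 2 / 5 * v ^ 5 * (1 - v ^ 2)⁻¹ := by
      have h1v : 1 - v ^ 2 = 4 * a * (a + 1) / (2 * a + 1) ^ 2 := by rw [hv]; field_simp; ring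
      have h2a : 2 * a + 1 ≠ 0 := by positivity
      rw [h1v]
      norm_num [Finset.sum_range_succ, hv]
      field_simp
      ring
    linarith
  · have h5 : 1 / (2 * ((n + 2 : ℕ) : ℝ) + 1) ≤ 1 / 5 := by
      gcongr; push_cast; linarith [n.cast_nonneg (α := ℝ)]
    calc 2 * (1 / (2 * ((n + 2 : ℕ) : ℝ) + 1)) * v ^ (2 * (n + 2) + 1)
        ≤ 2 * (1 / 5) * v ^ (2 * (n + 2) + 1) := by gcongr
      _ = 2 / 5 * v ^ 5 * (v ^ 2) ^ n := by ring

theorem mul_log_add_one_sub_log_le {t : ℝ} (ht : 0 ≤ t) :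
    t * (log (t + 1) - log t) ≤ 2 * t / (2 * t + 1) + 2 * t / (3 * (2 * t + 1) ^ 3)
      + 1 / (10 * (t + 1) * (2 * t + 1) ^ 3) := by
  rcases ht.eq_or_lt with rfl | ht
  · norm_num
  rw [← log_div (by positivity) ht.ne', show (t + 1) / t = 1 + t⁻¹ by field_simp]
  calc t * log (1 + t⁻¹)
      ≤ t * (2 / (2 * t + 1) + 2 / (3 * (2 * t + 1) ^ 3)
          + 1 / (10 * t * (t + 1) * (2 * t + 1) ^ 3)) :=
        mul_le_mul_of_nonneg_left (log_one_add_inv_le ht) ht.le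
    _ = _ := by field_simp

noncomputable def logBatirBound (t : ℝ) : ℝ :=
  log √(2 * π) + (t * log t - t) + 1 / 2 * log (t + 1 / 2) - 1 / (6 * (t + 3 / 8))

theorem logBatirBound_add_one_le {t : ℝ} (ht : 0 ≤ t) :
    logBatirBound (t + 1) ≤ logBatirBound t + log (t + 1) := by
  have hA := mul_log_add_one_sub_log_le ht
  have hB : log (t + 3 / 2) - log (t + 1 / 2) ≤ 2 / (2 * t + 2) + 2 / (3 * (2 * t + 2) ^ 3)
      + 1 / (10 * (t + 1 / 2) * (t + 3 / 2) * (2 * t + 2) ^ 3) := by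
    rw [← log_div (by positivity) (by positivity),
      show (t + 3 / 2) / (t + 1 / 2) = 1 + (t + 1 / 2)⁻¹ by field_simp; ring]
    convert log_one_add_inv_le (a := t + 1 / 2) (by positivity) using 2 <;> ring
  have hrat : 1 / (6 * (t + 3 / 8)) - 1 / (6 * (t + 1 + 3 / 8))
      + 1 / 2 * (2 / (2 * t + 2) + 2 / (3 * (2 * t + 2) ^ 3)
        + 1 / (10 * (t + 1 / 2) * (t + 3 / 2) * (2 * t + 2) ^ 3))
      + (2 * t / (2 * t + 1) + 2 * t / (3 * (2 * t + 1) ^ 3)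
        + 1 / (10 * (t + 1) * (2 * t + 1) ^ 3)) ≤ 1 := by
    rw [← sub_nonneg]
    convert (by positivity : (0 : ℝ) ≤
      (53 / 160 + 1063 / 480 * t + 1297 / 240 * t ^ 2 + 507 / 80 * t ^ 3 + 37 / 10 * t ^ 4
          + 19 / 20 * t ^ 5 + 1 / 15 * t ^ 6)
        / ((2 * t + 1) ^ 3 * (2 * t + 2) ^ 3 * (2 * t + 3) * (t + 1) * (t + 3 / 8) * (t + 11 / 8)))
      using 1
    field_simp
    ring
  unfold logBatirBound
  rw [show t + 1 + 1 / 2 = t + 3 / 2 by ring]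
  linarith

theorem logBatirBound_add_nat_sub_log_Gamma_le {t : ℝ} (ht : 0 ≤ t) (n : ℕ) :
    logBatirBound (t + n) - log (Gamma (t + n + 1)) ≤ logBatirBound t - log (Gamma (t + 1)) := by
  induction n with
  | zero => simp
  | succ n ih =>
    have hstep := logBatirBound_add_one_le (t := t + n) (by positivity)
    have hΓ : log (Gamma (t + n + 1 + 1)) = log (t + n + 1) + log (Gamma (t + n + 1)) := by
      rw [Gamma_add_one (by positivity),
        log_mul (by positivity) (Gamma_pos_of_pos (by positivity)).ne']
    push_cast
    rw [← add_assoc, hΓ]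
    linarith

theorem log_Gamma_add_nat_add_one_le {x : ℝ} (hx₀ : 0 ≤ x) (hx₁ : x ≤ 1) (N : ℕ) :
    log (Gamma (x + N + 1)) ≤ x * log (N + 1) + log N.factorial := by
  have hWendel := Gamma_add_le_rpow_mul_Gamma (x := N + 1) (by positivity) hx₀ hx₁
  rw [Gamma_nat_eq_factorial, add_comm (N + 1 : ℝ), ← add_assoc] at hWendel
  calc log (Gamma (x + N + 1)) ≤ log ((N + 1) ^ x * N.factorial) :=
        log_le_log (Gamma_pos_of_pos (by positivity)) hWendel
    _ = x * log (N + 1) + log N.factorial := by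
        rw [log_mul (by positivity) (by positivity), log_rpow (by positivity)]

theorem tendsto_log_one_add_div_natCast (c : ℝ) :
    Tendsto (fun N : ℕ => log (1 + c / N)) atTop (𝓝 0) := by
  have h : Tendsto (fun N : ℕ => 1 + c / N) atTop (𝓝 1) := by
    simpa using tendsto_const_nhds.add (tendsto_const_div_atTop_nhds_zero_nat c)
  simpa [Function.comp_def] using (continuousAt_log one_ne_zero).tendsto.comp h

theorem tendsto_natCast_mul_log_one_add_div (x : ℝ) :
    Tendsto (fun N : ℕ => N * log (1 + x / N)) atTop (𝓝 x) := by
  simpa [Function.comp_def, Real.log_pow] using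
    (continuousAt_log (exp_pos x).ne').tendsto.comp (tendsto_one_add_div_pow_exp x)

theorem tendsto_log_stirlingSeq :
    Tendsto (fun N => log (Stirling.stirlingSeq N)) atTop (𝓝 (log √π)) :=
  (continuousAt_log (by positivity)).tendsto.comp Stirling.tendsto_stirlingSeq_sqrt_pi

theorem tendsto_logBatirBound_add_nat_sub {x : ℝ} (hx : 0 ≤ x) :
    Tendsto (fun N : ℕ => logBatirBound (x + N) - (x * log (N + 1) + log N.factorial))
      atTop (𝓝 0) := by
  have hinv : Tendsto (fun N : ℕ => 1 / (6 * (x + N + 3 / 8))) atTop (𝓝 0) :=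
    tendsto_const_nhds.div_atTop <| Tendsto.const_mul_atTop (by norm_num) <|
      tendsto_atTop_add_const_right _ _ <| tendsto_atTop_add_const_left _ _
        tendsto_natCast_atTop_atTop
  have hsum := ((((((tendsto_const_nhds (x := log √π)).sub tendsto_log_stirlingSeq).add
    ((tendsto_natCast_mul_log_one_add_div x).sub_const x)).add
    ((tendsto_log_one_add_div_natCast x).const_mul x)).sub
    ((tendsto_log_one_add_div_natCast 1).const_mul x)).add
    ((tendsto_log_one_add_div_natCast (x + 1 / 2)).const_mul (1 / 2))).sub hinv
  simp only [sub_self, mul_zero, add_zero] at hsum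
  refine hsum.congr' ?_
  filter_upwards [eventually_ge_atTop 1] with N hN
  have hN : (0 : ℝ) < N := by exact_mod_cast hN
  have hlog : ∀ c, 0 ≤ c → log (1 + c / N) = log (N + c) - log N := fun c hc => by
    rw [← log_div (by positivity) hN.ne', add_div, div_self hN.ne']
  have hfact := Stirling.log_stirlingSeq_formula N
  rw [log_div hN.ne' (exp_pos 1).ne', log_exp, log_mul two_ne_zero hN.ne'] at hfact
  unfold logBatirBound
  rw [hlog x hx, hlog 1 zero_le_one, hlog (x + 1 / 2) (by positivity), log_sqrt pi_pos.le,
    log_sqrt (by positivity), log_mul two_ne_zero pi_ne_zero, add_comm x (N : ℝ),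
    ← add_assoc (N : ℝ) x (1 / 2)]
  linarith

theorem log_Gamma_add_one_le_logBatirBound {t : ℝ} (ht : 0 ≤ t) :
    log (Gamma (t + 1)) ≤ logBatirBound t := by
  obtain ⟨m, x, hx₀, hx₁, rfl⟩ : ∃ (m : ℕ) (x : ℝ), 0 ≤ x ∧ x ≤ 1 ∧ t = x + m :=
    ⟨⌊t⌋₊, t - ⌊t⌋₊, sub_nonneg.2 (Nat.floor_le ht), by linarith [Nat.lt_floor_add_one t],
      by ring⟩
  have hlim := (tendsto_logBatirBound_add_nat_sub hx₀).comp (tendsto_add_atTop_nat m)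
  refine sub_nonneg.1 (le_of_tendsto' hlim fun n => ?_)
  calc _ ≤ logBatirBound (x + ↑(n + m)) - log (Gamma (x + ↑(n + m) + 1)) := by
        simp only [Function.comp_apply]
        linarith [log_Gamma_add_nat_add_one_le hx₀ hx₁ (n + m)]
    _ = logBatirBound (x + m + n) - log (Gamma (x + m + n + 1)) := by push_cast; ring_nf
    _ ≤ _ := logBatirBound_add_nat_sub_log_Gamma_le (by positivity) n

theorem Gamma_add_one_le_batir {t : ℝ} (ht : 0 ≤ t) :
    Gamma (t + 1) ≤ √(2 * π) * exp (t * log t - t) * (t + 1 / 2) ^ (1 / 2 : ℝ)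
      * exp (-(1 / (6 * (t + 3 / 8)))) := by
  have hexp : exp (logBatirBound t) = √(2 * π) * exp (t * log t - t) * (t + 1 / 2) ^ (1 / 2 : ℝ)
      * exp (-(1 / (6 * (t + 3 / 8)))) := by
    rw [logBatirBound, sub_eq_add_neg _ (1 / _), exp_add, exp_add, exp_add, exp_log (by positivity),
      rpow_def_of_pos (by positivity), mul_comm (log _)]
  rw [← hexp, ← exp_log (Gamma_pos_of_pos (by positivity))]
  exact exp_le_exp.2 (log_Gamma_add_one_le_logBatirBound ht)

/-- With `B(x) = x^r − (k−1) ln x`, `x₀ = ((k−1)/r)^{1/r}` its minimizer, so that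
`B(x₀) = ψ((k−1)/r)` with `ψ(x) = x − x log x` (`ψ(0)=0`), we have
`e^{B(x₀)} Γ(k/r)/r ≤ M'_{k,r}`. -/
theorem gg_inverse_density_bound (k r : ℝ) (hk : 1 ≤ k) (hr : 1 ≤ r) :
    Real.exp ((k - 1) / r - (k - 1) / r * Real.log ((k - 1) / r)) *
        Real.Gamma (k / r) / r ≤
      Real.sqrt (2 * Real.pi) * Real.exp (-(1 / (6 * ((k - 1) / r + 3 / 8)))) *
        ((k - 1) / r + 1 / 2) ^ ((1 : ℝ) / 2) * ((k - 1) / r + 1) ^ (1 / r) / k := by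
  set t := (k - 1) / r with htdef
  have ht : 0 ≤ t := div_nonneg (by linarith) (by linarith)
  have hΓ : Gamma (k / r) / r = Gamma (t + 1 + 1 / r) / k := by
    have hkr : k / r = t + 1 / r := by rw [htdef]; field_simp; ring
    rw [add_right_comm, ← hkr, Gamma_add_one (by positivity)]
    field_simp
  have hWendel := Gamma_add_le_rpow_mul_Gamma (x := t + 1) (by positivity)
    (by positivity : (0 : ℝ) ≤ 1 / r) (by rw [div_le_one (by positivity)]; exact hr)
  have hcancel : exp (t - t * log t) * exp (t * log t - t) = 1 := by
    rw [← exp_add, sub_add_sub_cancel', sub_self, exp_zero]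
  calc exp (t - t * log t) * Gamma (k / r) / r
        = exp (t - t * log t) * Gamma (t + 1 + 1 / r) / k := by
        rw [mul_div_assoc, hΓ, ← mul_div_assoc]
    _ ≤ exp (t - t * log t) * ((t + 1) ^ (1 / r) * (√(2 * π) * exp (t * log t - t)
          * (t + 1 / 2) ^ (1 / 2 : ℝ) * exp (-(1 / (6 * (t + 3 / 8)))))) / k := by
        gcongr
        exact hWendel.trans (by gcongr; exact Gamma_add_one_le_batir ht)
    _ = _ := by linear_combination (√(2 * π) * exp (-(1 / (6 * (t + 3 / 8))))
          * (t + 1 / 2) ^ (1 / 2 : ℝ) * (t + 1) ^ (1 / r) / k) * hcancel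
end

section
/- Let X be a positive random variable, ξ a real random variable, and suppose P[|ξ| ≥ t | X] ≤ c_1 e^{−c_2 t²/X} for all t > 0, for constants c_1, c_2 > 1. Then there is a constant C depending only on k, r ≥ 1 such that the Kolmogorov distance satisfies d_K(L(X+ξ), GG(k,r)) ≤ C·( d_K(L(X), GG(k,r)) + (1 + c_1 + log c_2)/√c_2 ). -/
/-!
Off the event `|ξ| ≥ ε`, the event `X + ξ ≤ x` lies between `X ≤ x - ε` and `X ≤ x + ε`. The
`GG(k,r)` density is at most `M e^{-x/2}`, so shifting the argument of its CDF by `ε` costs at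
most `M ε`, and `d_K(L(X+ξ), GG) ≤ d_K(L(X), GG) + M ε + P[|ξ| ≥ ε]`. Conditioning on `X`,
`P[|ξ| ≥ ε] ≤ c₁ e^{-c₂ ε²/T} + P[X > T]`, and `P[X > T]` is at most the `GG` tail `2M e^{-T/2}`
plus `d_K(L(X), GG)`. The choice `T = log c₂`, `ε = (log c₁ + log c₂)/√c₂` makes every error
term `O((1 + c₁ + log c₂)/√c₂)`.
-/

open MeasureTheory Set Real

/-- The generalized gamma distribution `GG(k,r)` as a measure on `ℝ`, with density
`r x^{k−1} e^{−x^r}/Γ(k/r)` on `(0,∞)`. -/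
noncomputable def ggMeasure (k r : ℕ) : Measure ℝ :=
  (volume.restrict (Ioi (0:ℝ))).withDensity fun x =>
    ENNReal.ofReal ((r : ℝ) * x ^ (k - 1) * Real.exp (-(x ^ r)) / Real.Gamma ((k : ℝ) / r))

/-- Kolmogorov (sup-CDF) distance between two measures on `ℝ`. -/
noncomputable def kolmogorovDist (P Q : Measure ℝ) : ℝ :=
  ⨆ x : ℝ, |(P (Iic x)).toReal - (Q (Iic x)).toReal|

section KolmogorovDist

variable {P Q : Measure ℝ}

lemma abs_sub_le_kolmogorovDist [IsFiniteMeasure P] [IsFiniteMeasure Q] (x : ℝ) :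
    |P.real (Iic x) - Q.real (Iic x)| ≤ kolmogorovDist P Q := by
  refine le_ciSup (f := fun x => |P.real (Iic x) - Q.real (Iic x)|)
    ⟨P.real univ + Q.real univ, ?_⟩ x
  rintro _ ⟨y, rfl⟩
  have hP := measureReal_mono (μ := P) (subset_univ (Iic y))
  have hQ := measureReal_mono (μ := Q) (subset_univ (Iic y))
  rw [abs_le]
  constructor <;> linarith [measureReal_nonneg (μ := P) (s := Iic y),
    measureReal_nonneg (μ := Q) (s := Iic y)]

lemma kolmogorovDist_nonneg [IsFiniteMeasure P] [IsFiniteMeasure Q] : 0 ≤ kolmogorovDist P Q :=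
  (abs_nonneg _).trans (abs_sub_le_kolmogorovDist 0)

lemma kolmogorovDist_le {c : ℝ} (h : ∀ x, |P.real (Iic x) - Q.real (Iic x)| ≤ c) :
    kolmogorovDist P Q ≤ c :=
  ciSup_le h

lemma measureReal_Ioi_le_add_kolmogorovDist [IsProbabilityMeasure P] [IsProbabilityMeasure Q]
    (x : ℝ) : P.real (Ioi x) ≤ Q.real (Ioi x) + kolmogorovDist P Q := by
  rw [← compl_Iic, probReal_compl_eq_one_sub measurableSet_Iic,
    probReal_compl_eq_one_sub measurableSet_Iic]
  linarith [(abs_le.1 (abs_sub_le_kolmogorovDist (P := P) (Q := Q) x)).1]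

end KolmogorovDist

section Perturbation

variable {Ω : Type*} [MeasurableSpace Ω] {μ : Measure Ω}

lemma kolmogorovDist_map_add_le [IsFiniteMeasure μ] {X ξ : Ω → ℝ} (hX : Measurable X)
    (hξ : Measurable ξ) {G : Measure ℝ} [IsFiniteMeasure G] {A ε : ℝ}
    (hG : ∀ a b, a ≤ b → G.real (Ioc a b) ≤ A * (b - a)) (hε : 0 ≤ ε) :
    kolmogorovDist (μ.map fun ω => X ω + ξ ω) G
      ≤ kolmogorovDist (μ.map X) G + A * ε + μ.real {ω | ε ≤ |ξ ω|} := by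
  set S := {ω | ε ≤ |ξ ω|}
  have hcdf : ∀ a b, a ≤ b → G.real (Iic b) ≤ G.real (Iic a) + A * (b - a) := fun a b hab => by
    rw [← Iic_union_Ioc_eq_Iic hab, measureReal_union (Iic_disjoint_Ioc le_rfl) measurableSet_Ioc]
    linarith [hG a b hab]
  have hcover {s t : Set Ω} (h : ∀ ω ∉ S, ω ∈ s → ω ∈ t) : μ.real s ≤ μ.real t + μ.real S :=
    (measureReal_mono fun ω hω => (em (ω ∈ S)).elim Or.inr fun hS => Or.inl (h ω hS hω)).trans
      (measureReal_union_le t S)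
  set Y := fun ω => X ω + ξ ω
  have hupper (x : ℝ) : μ.real (Y ⁻¹' Iic x) ≤ μ.real (X ⁻¹' Iic (x + ε)) + μ.real S :=
    hcover fun ω hS hω => by
      have := neg_abs_le (ξ ω)
      simp only [S, Y, mem_ofPred_eq, mem_preimage, mem_Iic, not_le] at *
      linarith
  have hlower (x : ℝ) : μ.real (X ⁻¹' Iic (x - ε)) ≤ μ.real (Y ⁻¹' Iic x) + μ.real S :=
    hcover fun ω hS hω => by
      have := le_abs_self (ξ ω)
      simp only [S, Y, mem_ofPred_eq, mem_preimage, mem_Iic, not_le] at *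
      linarith
  refine kolmogorovDist_le fun x => ?_
  have hd (y : ℝ) := abs_le.1 (abs_sub_le_kolmogorovDist (P := μ.map X) (Q := G) y)
  simp only [map_measureReal_apply hX measurableSet_Iic] at hd
  rw [map_measureReal_apply (f := Y) (hX.add hξ) measurableSet_Iic, abs_le]
  constructor
  · linarith [hlower x, (hd (x - ε)).1, hcdf (x - ε) x (by linarith)]
  · linarith [hupper x, (hd (x + ε)).2, hcdf x (x + ε) (by linarith)]

end Perturbation

section ConditionalTail

variable {Ω : Type*} {m m₀ : MeasurableSpace Ω} {μ : Measure Ω} [IsProbabilityMeasure μ]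

lemma measureReal_le_add_of_condExp_indicator_le (hm : m ≤ m₀) {S U : Set Ω}
    (hS : MeasurableSet S) (hU : MeasurableSet U) {a : ℝ} (ha : 0 ≤ a)
    (h : ∀ᵐ ω ∂μ, ω ∉ U → μ[S.indicator 1 | m] ω ≤ a) :
    μ.real S ≤ a + μ.real U := by
  have hind : Integrable (S.indicator (1 : Ω → ℝ)) μ := (integrable_const 1).indicator hS
  have hindU : Integrable (U.indicator (1 : Ω → ℝ)) μ := (integrable_const 1).indicator hU
  have hle_one : μ[S.indicator 1 | m] ≤ᵐ[μ] fun _ => (1 : ℝ) := by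
    simpa only [condExp_const hm] using condExp_mono (m := m) hind (integrable_const (1 : ℝ))
      (ae_of_all _ (indicator_le_self' fun _ _ => zero_le_one))
  have hle : μ[S.indicator 1 | m] ≤ᵐ[μ] fun ω => a + U.indicator 1 ω := by
    filter_upwards [h, hle_one] with ω hω h1
    by_cases hωU : ω ∈ U
    · simp only [indicator_of_mem hωU, Pi.one_apply]
      linarith
    · simpa only [indicator_of_notMem hωU, add_zero] using hω hωU
  calc μ.real S = ∫ ω, μ[S.indicator 1 | m] ω ∂μ := by
        rw [integral_condExp hm, integral_indicator_one hS]
    _ ≤ ∫ ω, a + U.indicator 1 ω ∂μ :=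
        integral_mono_ae integrable_condExp ((integrable_const a).add hindU) hle
    _ = a + μ.real U := by
        rw [integral_add (integrable_const a) hindU,
          integral_indicator_one hU, integral_const, probReal_univ, one_smul]

lemma measureReal_le_of_condExp_le_exp {X ξ : Ω → ℝ} (hX : Measurable[m₀] X)
    (hξ : Measurable[m₀] ξ) (hXpos : ∀ ω, 0 < X ω) {c₁ c₂ t : ℝ} (hc₁ : 0 ≤ c₁) (hc₂ : 0 ≤ c₂)
    (htail : ∀ᵐ ω ∂μ, μ[{ω' | t ≤ |ξ ω'|}.indicator (fun _ => (1 : ℝ)) |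
        MeasurableSpace.comap X inferInstance] ω ≤ c₁ * exp (-c₂ * t ^ 2 / X ω))
    (T : ℝ) :
    μ.real {ω | t ≤ |ξ ω|} ≤ c₁ * exp (-c₂ * t ^ 2 / T) + μ.real {ω | T < X ω} := by
  refine measureReal_le_add_of_condExp_indicator_le hX.comap_le
    (measurableSet_le measurable_const hξ.abs) (measurableSet_lt measurable_const hX)
    (by positivity) ?_
  filter_upwards [htail] with ω hω hωT
  refine hω.trans (mul_le_mul_of_nonneg_left (exp_le_exp.2 ?_) hc₁)
  rw [neg_mul, neg_div, neg_div, neg_le_neg_iff]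
  exact div_le_div_of_nonneg_left (by positivity) (hXpos ω) (not_lt.1 hωT)

end ConditionalTail

lemma exp_neg_half_log {x : ℝ} (hx : 0 < x) : exp (-(log x / 2)) = 1 / √x := by
  rw [exp_neg, exp_half, exp_log hx, one_div]

lemma mul_exp_neg_sq_div_log_le {c₁ c₂ : ℝ} (hc₁ : 1 < c₁) (hc₂ : 1 < c₂) :
    c₁ * exp (-c₂ * ((log c₁ + log c₂) / √c₂) ^ 2 / log c₂) ≤ 1 / √c₂ := by
  have hL := log_pos hc₂
  have hexponent : log c₁ + log c₂ ≤ c₂ * ((log c₁ + log c₂) / √c₂) ^ 2 / log c₂ := by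
    rw [div_pow, sq_sqrt (by linarith), mul_div_cancel₀ _ (by linarith), le_div_iff₀ hL]
    nlinarith [log_pos hc₁]
  calc c₁ * exp (-c₂ * ((log c₁ + log c₂) / √c₂) ^ 2 / log c₂)
      ≤ c₁ * exp (-(log c₁ + log c₂)) := by
        gcongr
        rw [neg_mul, neg_div]
        exact neg_le_neg hexponent
    _ = exp (-log c₂) := by
        rw [neg_add, exp_add, exp_neg (log c₁), exp_log (by linarith)]
        field_simp
    _ ≤ exp (-(log c₂ / 2)) := exp_le_exp.2 (by linarith)
    _ = 1 / √c₂ := exp_neg_half_log (by linarith)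

theorem kolmogorovDist_map_add_le_of_condExp_le_exp {Ω : Type*} [MeasurableSpace Ω]
    {μ : Measure Ω} [IsProbabilityMeasure μ] {X ξ : Ω → ℝ} (hX : Measurable X)
    (hξ : Measurable ξ) (hXpos : ∀ ω, 0 < X ω) {G : Measure ℝ} [IsProbabilityMeasure G] {A : ℝ}
    (hA : 0 ≤ A) (hG : ∀ a b, a ≤ b → G.real (Ioc a b) ≤ A * (b - a))
    (hGtail : ∀ T, 0 ≤ T → G.real (Ioi T) ≤ 2 * A * exp (-(T / 2))) {c₁ c₂ : ℝ}
    (hc₁ : 1 < c₁) (hc₂ : 1 < c₂)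
    (htail : ∀ t : ℝ, 0 < t → ∀ᵐ ω ∂μ, μ[{ω' | t ≤ |ξ ω'|}.indicator (fun _ => (1 : ℝ)) |
        MeasurableSpace.comap X inferInstance] ω ≤ c₁ * exp (-c₂ * t ^ 2 / X ω)) :
    kolmogorovDist (μ.map fun ω => X ω + ξ ω) G
      ≤ (3 * A + 2) * (kolmogorovDist (μ.map X) G + (1 + c₁ + log c₂) / √c₂) := by
  have := Measure.isProbabilityMeasure_map (μ := μ) hX.aemeasurable
  set d := kolmogorovDist (μ.map X) G
  set L := log c₂
  set s := 1 / √c₂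
  set ε := (log c₁ + L) / √c₂
  set Q := (1 + c₁ + L) / √c₂
  have hL : 0 < L := log_pos hc₂
  have hε : 0 < ε := div_pos (by linarith [log_pos hc₁]) (by positivity)
  have hXtail : μ.real {ω | L < X ω} ≤ 2 * A * s + d := by
    have hGL := hGtail L hL.le
    rw [exp_neg_half_log (by linarith)] at hGL
    change μ.real (X ⁻¹' Ioi L) ≤ _
    rw [← map_measureReal_apply hX measurableSet_Ioi]
    exact (measureReal_Ioi_le_add_kolmogorovDist L).trans (add_le_add_left hGL _)
  have hξtail : μ.real {ω | ε ≤ |ξ ω|} ≤ s + (2 * A * s + d) :=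
    (measureReal_le_of_condExp_le_exp hX hξ hXpos (by linarith) (by linarith) (htail ε hε) L).trans
      (add_le_add (mul_exp_neg_sq_div_log_le hc₁ hc₂) hXtail)
  have hε_le : ε ≤ Q :=
    div_le_div_of_nonneg_right (by linarith [log_le_sub_one_of_pos (show 0 < c₁ by linarith)])
      (sqrt_nonneg _)
  have hs_le : s ≤ Q := div_le_div_of_nonneg_right (by linarith) (sqrt_nonneg _)
  have hd : 0 ≤ d := kolmogorovDist_nonneg
  calc _ ≤ d + A * ε + μ.real {ω | ε ≤ |ξ ω|} := kolmogorovDist_map_add_le hX hξ hG hε.le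
    _ ≤ (3 * A + 2) * (d + Q) := by
        nlinarith [mul_le_mul_of_nonneg_left hε_le hA, mul_le_mul_of_nonneg_left hs_le hA,
          mul_nonneg hA hd]

open scoped Nat

lemma pow_le_factorial_mul_two_pow_mul_exp_half (n : ℕ) {x : ℝ} (hx : 0 ≤ x) :
    x ^ n ≤ n ! * 2 ^ n * exp (x / 2) := by
  have h := pow_div_factorial_le_exp (x := x / 2) (by positivity) n
  rw [div_pow, div_div, div_le_iff₀ (by positivity)] at h
  linarith

section GeneralizedGamma

variable (k r : ℕ)

noncomputable def ggDensity (x : ℝ) : ℝ :=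
  (r : ℝ) * x ^ (k - 1) * exp (-(x ^ r)) / Gamma ((k : ℝ) / r)

noncomputable def ggDensityBound : ℝ :=
  (r : ℝ) * (k - 1)! * 2 ^ (k - 1) * exp 1 / Gamma ((k : ℝ) / r)

lemma ggMeasure_eq_withDensity :
    ggMeasure k r =
      (volume.restrict (Ioi 0)).withDensity fun x => ENNReal.ofReal (ggDensity k r x) :=
  rfl

lemma ggDensityBound_nonneg : 0 ≤ ggDensityBound k r := by
  have : 0 ≤ Gamma ((k : ℝ) / r) := Gamma_nonneg_of_nonneg (by positivity)
  unfold ggDensityBound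
  positivity

lemma ggDensity_nonneg {x : ℝ} (hx : 0 ≤ x) : 0 ≤ ggDensity k r x := by
  have : 0 ≤ Gamma ((k : ℝ) / r) := Gamma_nonneg_of_nonneg (by positivity)
  unfold ggDensity
  positivity

variable {k r}

lemma ggDensity_le (hr : 1 ≤ r) {x : ℝ} (hx : 0 ≤ x) :
    ggDensity k r x ≤ ggDensityBound k r * exp (-(x / 2)) := by
  have hpow := pow_le_factorial_mul_two_pow_mul_exp_half (k - 1) hx
  have hexp : exp (-(x ^ r)) ≤ exp 1 * exp (-x) := by
    rw [← exp_add, exp_le_exp]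
    rcases le_total x 1 with h | h
    · nlinarith [pow_nonneg hx r]
    · nlinarith [le_self_pow₀ h (by omega : r ≠ 0)]
  have hsplit : exp (x / 2) * (exp 1 * exp (-x)) = exp 1 * exp (-(x / 2)) := by
    rw [← exp_add, ← exp_add, ← exp_add]; ring_nf
  unfold ggDensity ggDensityBound
  rw [div_mul_eq_mul_div]
  gcongr ?_ / _
  calc (r : ℝ) * x ^ (k - 1) * exp (-(x ^ r))
      ≤ r * ((k - 1)! * 2 ^ (k - 1) * exp (x / 2)) * (exp 1 * exp (-x)) := by gcongr
    _ = r * (k - 1)! * 2 ^ (k - 1) * (exp (x / 2) * (exp 1 * exp (-x))) := by ring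
    _ = r * (k - 1)! * 2 ^ (k - 1) * exp 1 * exp (-(x / 2)) := by rw [hsplit]; ring

lemma ggDensity_eq_rpow (hk : 1 ≤ k) (x : ℝ) :
    ggDensity k r x = r / Gamma ((k : ℝ) / r) * (x ^ ((k : ℝ) - 1) * exp (-x ^ (r : ℝ))) := by
  rw [ggDensity, ← rpow_natCast x (k - 1), ← rpow_natCast x r, Nat.cast_sub hk]
  ring_nf

lemma integrableOn_ggDensity (hk : 1 ≤ k) (hr : 1 ≤ r) : IntegrableOn (ggDensity k r) (Ioi 0) := by
  simp_rw [funext (ggDensity_eq_rpow hk)]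
  exact ((integrableOn_rpow_mul_exp_neg_rpow (by simp; omega) (by simp; omega)).const_mul _)

lemma integral_ggDensity (hk : 1 ≤ k) (hr : 1 ≤ r) : ∫ x in Ioi 0, ggDensity k r x = 1 := by
  have hΓ : 0 < Gamma ((k : ℝ) / r) := Gamma_pos_of_pos (by positivity)
  simp_rw [ggDensity_eq_rpow hk]
  rw [integral_const_mul, integral_rpow_mul_exp_neg_rpow (by simp; omega) (by simp; omega),
    sub_add_cancel]
  field_simp

lemma ggMeasure_apply (hk : 1 ≤ k) (hr : 1 ≤ r) {s : Set ℝ} (hs : MeasurableSet s) :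
    ggMeasure k r s = ENNReal.ofReal (∫ x in s ∩ Ioi 0, ggDensity k r x) := by
  rw [ggMeasure_eq_withDensity, withDensity_apply _ hs, Measure.restrict_restrict hs,
    ofReal_integral_eq_lintegral_ofReal
      ((integrableOn_ggDensity hk hr).mono_set inter_subset_right)]
  exact (ae_restrict_iff' (hs.inter measurableSet_Ioi)).2
    (ae_of_all _ fun x hx => ggDensity_nonneg k r hx.2.le)

lemma isProbabilityMeasure_ggMeasure (hk : 1 ≤ k) (hr : 1 ≤ r) :
    IsProbabilityMeasure (ggMeasure k r) :=
  ⟨by rw [ggMeasure_apply hk hr MeasurableSet.univ, univ_inter, integral_ggDensity hk hr,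
    ENNReal.ofReal_one]⟩

lemma ggMeasure_real_apply (hk : 1 ≤ k) (hr : 1 ≤ r) {s : Set ℝ} (hs : MeasurableSet s) :
    (ggMeasure k r).real s = ∫ x in s ∩ Ioi 0, ggDensity k r x := by
  rw [measureReal_def, ggMeasure_apply hk hr hs, ENNReal.toReal_ofReal
    (setIntegral_nonneg (hs.inter measurableSet_Ioi) fun x hx => ggDensity_nonneg k r hx.2.le)]

lemma ggMeasure_real_Ioc_le (hk : 1 ≤ k) (hr : 1 ≤ r) {a b : ℝ} (hab : a ≤ b) :
    (ggMeasure k r).real (Ioc a b) ≤ ggDensityBound k r * (b - a) := by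
  have hbound : ∀ x ∈ Ioc a b ∩ Ioi 0, ‖ggDensity k r x‖ ≤ ggDensityBound k r := fun x hx => by
    rw [Real.norm_of_nonneg (ggDensity_nonneg k r hx.2.le)]
    refine (ggDensity_le hr hx.2.le).trans (mul_le_of_le_one_right (ggDensityBound_nonneg k r) ?_)
    exact exp_le_one_iff.2 (by linarith [hx.2.out])
  rw [ggMeasure_real_apply hk hr measurableSet_Ioc]
  calc _ ≤ ‖∫ x in Ioc a b ∩ Ioi 0, ggDensity k r x‖ := le_norm_self _
    _ ≤ ggDensityBound k r * volume.real (Ioc a b ∩ Ioi 0) :=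
      norm_setIntegral_le_of_norm_le_const
        ((measure_mono inter_subset_left).trans_lt measure_Ioc_lt_top) hbound
    _ ≤ ggDensityBound k r * (b - a) := by
      gcongr
      · exact ggDensityBound_nonneg k r
      · exact (measureReal_mono inter_subset_left measure_Ioc_lt_top.ne).trans
          (Real.volume_real_Ioc_of_le hab).le

lemma ggMeasure_real_Ioi_le (hk : 1 ≤ k) (hr : 1 ≤ r) {T : ℝ} (hT : 0 ≤ T) :
    (ggMeasure k r).real (Ioi T) ≤ 2 * ggDensityBound k r * exp (-(T / 2)) := by
  rw [ggMeasure_real_apply hk hr measurableSet_Ioi, inter_eq_left.2 (Ioi_subset_Ioi hT)]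
  calc _ ≤ ∫ x in Ioi T, ggDensityBound k r * exp (-(1 / 2) * x) :=
        setIntegral_mono_on ((integrableOn_ggDensity hk hr).mono_set (Ioi_subset_Ioi hT))
          ((integrableOn_exp_mul_Ioi (by norm_num) T).const_mul _) measurableSet_Ioi
          fun x hx => by
            rw [show -(1 / 2) * x = -(x / 2) by ring]
            exact ggDensity_le hr (hT.trans hx.out.le)
    _ = 2 * ggDensityBound k r * exp (-(T / 2)) := by
      rw [integral_const_mul, integral_exp_mul_Ioi (by norm_num), neg_div_neg_eq,
        show -(1 / 2) * T = -(T / 2) by ring]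
      ring

end GeneralizedGamma

/-- Perturbation lemma under a conditional Gaussian-type tail: for integers
`k, r ≥ 1` there is a constant `C = C(k,r)` such that, if
`P[|ξ| ≥ t | X] ≤ c₁ e^{−c₂ t²/X}` for all `t > 0` with constants `c₁, c₂ > 1`, then
`d_K(L(X+ξ), GG(k,r)) ≤ C (d_K(L(X), GG(k,r)) + (1 + c₁ + log c₂)/√c₂)`. -/
theorem gg_perturbation_gaussian_tail (k r : ℕ) (hk : 1 ≤ k) (hr : 1 ≤ r) :
    ∃ C : ℝ, 0 < C ∧
      ∀ (Ω : Type) (mΩ : MeasurableSpace Ω) (μ : Measure Ω),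
        IsProbabilityMeasure μ →
        ∀ (X ξ : Ω → ℝ), Measurable X → Measurable ξ → (∀ ω, 0 < X ω) →
        ∀ c₁ c₂ : ℝ, 1 < c₁ → 1 < c₂ →
        (∀ t : ℝ, 0 < t →
          ∀ᵐ ω ∂μ,
            (μ[Set.indicator {ω' | t ≤ |ξ ω'|} (fun _ => (1:ℝ)) |
                MeasurableSpace.comap X inferInstance]) ω
              ≤ c₁ * Real.exp (-c₂ * t ^ 2 / X ω)) →
        kolmogorovDist (Measure.map (fun ω => X ω + ξ ω) μ) (ggMeasure k r)
          ≤ C * (kolmogorovDist (Measure.map X μ) (ggMeasure k r) +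
              (1 + c₁ + Real.log c₂) / Real.sqrt c₂) := by
  have := isProbabilityMeasure_ggMeasure hk hr
  refine ⟨3 * ggDensityBound k r + 2, by positivity [ggDensityBound_nonneg k r], ?_⟩
  intro Ω _ μ _ X ξ hX hξ hXpos c₁ c₂ hc₁ hc₂ htail
  exact kolmogorovDist_map_add_le_of_condExp_le_exp hX hξ hXpos (ggDensityBound_nonneg k r)
    (fun _ _ => ggMeasure_real_Ioc_le hk hr) (fun _ => ggMeasure_real_Ioi_le hk hr) hc₁ hc₂ htail
end
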